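/- arXiv:1110.4141 — 6 statements merged into one kernel-verified Lean document; each statement's English description precedes it below -/
import Mathlib

section
/- Let a < b be real numbers, let n ∈ ℕ with n ≥ 2, and let α : [a,b] × [a,b] → ℝ satisfy 1/n < α(t,τ) < 1 for all t, τ ∈ [a,b]. Then the left Riemann–Liouville integral of variable fractional order α, given by (ₐI^{α}_t f)(t) = ∫_a^t (t−τ)^{α(t,τ)−1} / Γ(α(t,τ)) · f(τ) dτ, maps L¹[a,b] into L¹[a,b], is a linear operator, and is bounded with operator norm strictly less than n + b − a; that is, ‖ₐI^{α}_t f‖_{L¹} < (n + b − a) ‖f‖_{L¹} for every nonzero f ∈ L¹[a,b]. -/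
/-!
Since `Γ ≥ 1` on `(0, 1]`, the kernel `(t - τ)^(α - 1) / Γ(α)` with `1/n ≤ α < 1` is dominated by
the majorant equal to `s^(1/n - 1)` for `0 < s = t - τ ≤ 1` and to `1` for `s > 1`. Hence every
column `t ↦ K(t, τ)` of the kernel truncated to `a < τ ≤ t` has integral at most
`n + max (b - a - 1) 0 < n + b - a` over `[a, b]`, and by Fubini–Tonelli this column bound bounds
the operator on `L¹` (Schur's test).
-/

open MeasureTheory

/-- The left Riemann–Liouville integral of variable fractional order `α`:
`(ₐI^α_t f)(t) = ∫_a^t (t−τ)^(α(t,τ)−1)/Γ(α(t,τ)) · f(τ) dτ`. -/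
noncomputable def leftRLint (a : ℝ) (α : ℝ → ℝ → ℝ) (f : ℝ → ℝ) (t : ℝ) : ℝ :=
  ∫ τ in a..t, (t - τ) ^ (α t τ - 1) / Real.Gamma (α t τ) * f τ

open Set

theorem Real.measurable_Gamma : Measurable Real.Gamma := by
  have h : Real.Gamma = fun x : ℝ => ((Complex.Gamma x)⁻¹)⁻¹.re := by
    ext x; simp [Complex.Gamma_ofReal]
  rw [h]
  exact (Complex.differentiable_one_div_Gamma.continuous.measurable.comp
    Complex.measurable_ofReal).inv.re

theorem Real.one_le_Gamma_of_mem_Ioc {x : ℝ} (hx : x ∈ Ioc 0 1) : 1 ≤ Real.Gamma x := by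
  simpa using Real.Gamma_strictAntiOn_Ioc.antitoneOn hx (right_mem_Ioc.2 one_pos) hx.2

section KernelOperator

variable {X Y : Type*} [MeasurableSpace X] [MeasurableSpace Y] {μ : Measure X} {ν : Measure Y}
  [SFinite μ] [SFinite ν] {K : X × Y → ℝ} {f : Y → ℝ} {C : ℝ}

theorem integrable_kernel_mul (hK : AEStronglyMeasurable K (μ.prod ν)) (hf : Integrable f ν)
    (hKC : ∀ᵐ y ∂ν, Integrable (fun x => K (x, y)) μ ∧ ∫ x, |K (x, y)| ∂μ ≤ C) :
    Integrable (fun p => K p * f p.2) (μ.prod ν) := by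
  have hKf : AEStronglyMeasurable (fun p => K p * f p.2) (μ.prod ν) := hK.mul hf.1.comp_snd
  refine (integrable_prod_iff' hKf).2 ⟨?_, ?_⟩
  · filter_upwards [hKC] with y hy using hy.1.mul_const (f y)
  · refine (hf.abs.const_mul C).mono' hKf.norm.prod_swap.integral_prod_right' ?_
    filter_upwards [hKC] with y hy
    simp_rw [Real.norm_eq_abs, abs_mul, integral_mul_const]
    rw [abs_of_nonneg (mul_nonneg (integral_nonneg fun _ => abs_nonneg _) (abs_nonneg _))]
    exact mul_le_mul_of_nonneg_right hy.2 (abs_nonneg _)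

theorem integral_abs_integral_kernel_mul_le (hK : AEStronglyMeasurable K (μ.prod ν))
    (hf : Integrable f ν)
    (hKC : ∀ᵐ y ∂ν, Integrable (fun x => K (x, y)) μ ∧ ∫ x, |K (x, y)| ∂μ ≤ C) :
    ∫ x, |∫ y, K (x, y) * f y ∂ν| ∂μ ≤ C * ∫ y, |f y| ∂ν := by
  have hKf := integrable_kernel_mul hK hf hKC
  calc ∫ x, |∫ y, K (x, y) * f y ∂ν| ∂μ
      ≤ ∫ x, ∫ y, |K (x, y) * f y| ∂ν ∂μ :=
        integral_mono hKf.integral_prod_left.abs hKf.integral_norm_prod_left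
          fun x => abs_integral_le_integral_abs
    _ = ∫ y, (∫ x, |K (x, y)| ∂μ) * |f y| ∂ν := by
        rw [integral_integral_swap hKf.abs]
        simp_rw [abs_mul, integral_mul_const]
    _ ≤ ∫ y, C * |f y| ∂ν := by
        refine integral_mono_ae ?_ (hf.abs.const_mul C) ?_
        · simpa [abs_mul, integral_mul_const] using hKf.integral_norm_prod_right
        · filter_upwards [hKC] with y hy
          exact mul_le_mul_of_nonneg_right hy.2 (abs_nonneg _)
    _ = C * ∫ y, |f y| ∂ν := integral_const_mul C _

end KernelOperator

noncomputable def rlMajorant (c : ℝ) : ℝ → ℝ :=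
  (Ioc 0 1).indicator (· ^ (c - 1)) + (Ioi 1).indicator 1

section Majorant

variable {c : ℝ}

theorem rlMajorant_nonneg (x : ℝ) : 0 ≤ rlMajorant c x :=
  add_nonneg (indicator_nonneg (fun _ hy => Real.rpow_nonneg hy.1.le _) x)
    (indicator_nonneg (fun _ _ => zero_le_one) x)

theorem rpow_sub_one_div_Gamma_le_rlMajorant {β x : ℝ} (hc : 0 < c) (hcβ : c ≤ β) (hβ : β < 1)
    (hx : 0 ≤ x) : x ^ (β - 1) / Real.Gamma β ≤ rlMajorant c x := by
  rcases hx.eq_or_lt with rfl | hx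
  · rw [Real.zero_rpow (by linarith), zero_div]
    exact rlMajorant_nonneg 0
  have hpow_le : x ^ (β - 1) / Real.Gamma β ≤ x ^ (β - 1) :=
    div_le_self (Real.rpow_nonneg hx.le _)
      (Real.one_le_Gamma_of_mem_Ioc ⟨hc.trans_le hcβ, hβ.le⟩)
  refine hpow_le.trans ?_
  rcases le_or_gt x 1 with hx1 | hx1
  · have hx' : x ∉ Ioi 1 := not_lt.2 hx1
    simp only [rlMajorant, Pi.add_apply, indicator_of_mem (mem_Ioc.2 ⟨hx, hx1⟩),
      indicator_of_notMem hx', add_zero]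
    exact Real.rpow_le_rpow_of_exponent_ge hx hx1 (by linarith)
  · have hx' : x ∉ Ioc 0 1 := fun h => (not_le.2 hx1) h.2
    simp only [rlMajorant, Pi.add_apply, indicator_of_mem (mem_Ioi.2 hx1),
      indicator_of_notMem hx', zero_add, Pi.one_apply]
    exact Real.rpow_le_one_of_one_le_of_nonpos hx1.le (by linarith)

theorem integrableOn_rpow_Ioc_zero_one (hc : 0 < c) :
    IntegrableOn (· ^ (c - 1)) (Ioc (0 : ℝ) 1) :=
  (intervalIntegrable_iff_integrableOn_Ioc_of_le zero_le_one).1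
    (intervalIntegral.intervalIntegrable_rpow' (by linarith))

theorem locallyIntegrable_rlMajorant (hc : 0 < c) : LocallyIntegrable (rlMajorant c) :=
  ((integrableOn_rpow_Ioc_zero_one hc).integrable_indicator measurableSet_Ioc).locallyIntegrable.add
    ((locallyIntegrable_const (1 : ℝ)).indicator measurableSet_Ioi)

theorem setIntegral_rlMajorant_le (hc : 0 < c) {s : Set ℝ} {v : ℝ} (hsv : s ⊆ Iic v) :
    ∫ x in s, rlMajorant c x ≤ 1 / c + max (v - 1) 0 := by
  have h₁ : Integrable ((Ioc (0 : ℝ) 1).indicator (· ^ (c - 1))) :=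
    (integrableOn_rpow_Ioc_zero_one hc).integrable_indicator measurableSet_Ioc
  have h₂ : IntegrableOn ((Ioi (1 : ℝ)).indicator (1 : ℝ → ℝ)) s := by
    refine (integrable_indicator_iff measurableSet_Ioi).2 (integrableOn_const ?_)
    rw [Measure.restrict_apply measurableSet_Ioi]
    exact ((measure_mono (t := Ioc 1 v) fun x hx => ⟨hx.1, hsv hx.2⟩).trans_lt
      measure_Ioc_lt_top).ne
  simp only [rlMajorant, Pi.add_apply]
  rw [integral_add h₁.integrableOn h₂]
  gcongr
  · rw [integral_indicator measurableSet_Ioc, Measure.restrict_restrict measurableSet_Ioc]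
    calc ∫ x in Ioc 0 1 ∩ s, x ^ (c - 1) ≤ ∫ x in Ioc 0 1, x ^ (c - 1) :=
          setIntegral_mono_set (integrableOn_rpow_Ioc_zero_one hc)
            (ae_restrict_of_forall_mem measurableSet_Ioc fun x hx => Real.rpow_nonneg hx.1.le _)
            inter_subset_left.eventuallyLE
      _ = 1 / c := by
          rw [← intervalIntegral.integral_of_le zero_le_one, integral_rpow (by left; linarith)]
          simp [Real.zero_rpow hc.ne']
  · rw [integral_indicator_one measurableSet_Ioi, measureReal_restrict_apply measurableSet_Ioi,
      ← Real.volume_real_Ioc]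
    exact measureReal_mono (fun x hx => ⟨hx.1, hsv hx.2⟩) measure_Ioc_lt_top.ne

end Majorant

noncomputable def rlKernel (α : ℝ → ℝ → ℝ) (t τ : ℝ) : ℝ :=
  (t - τ) ^ (α t τ - 1) / Real.Gamma (α t τ)

noncomputable def leftRLKernel (a : ℝ) (α : ℝ → ℝ → ℝ) : ℝ × ℝ → ℝ :=
  {p | a < p.2 ∧ p.2 ≤ p.1}.indicator (Function.uncurry (rlKernel α))

section Kernel

variable {a b c : ℝ} {α : ℝ → ℝ → ℝ}

theorem leftRLint_add {f g : ℝ → ℝ} {t : ℝ}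
    (hf : IntervalIntegrable (fun τ => rlKernel α t τ * f τ) volume a t)
    (hg : IntervalIntegrable (fun τ => rlKernel α t τ * g τ) volume a t) :
    leftRLint a α (f + g) t = leftRLint a α f t + leftRLint a α g t := by
  simp only [leftRLint, Pi.add_apply, mul_add]
  exact intervalIntegral.integral_add hf hg

theorem leftRLint_smul (f : ℝ → ℝ) (k t : ℝ) : leftRLint a α (k • f) t = k * leftRLint a α f t := by
  simp only [leftRLint, Pi.smul_apply, smul_eq_mul, mul_left_comm _ k]
  exact intervalIntegral.integral_const_mul k _

theorem measurable_leftRLKernel (hα : Measurable (Function.uncurry α)) :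
    Measurable (leftRLKernel a α) :=
  (((measurable_fst.sub measurable_snd).pow (hα.sub measurable_const)).div
    (Real.measurable_Gamma.comp hα)).indicator
    ((measurableSet_lt measurable_const measurable_snd).inter
      (measurableSet_le measurable_snd measurable_fst))

theorem leftRLKernel_apply (t τ : ℝ) :
    leftRLKernel a α (t, τ) = (Ioc a t).indicator (rlKernel α t) τ := rfl

theorem leftRLint_eq_integral_leftRLKernel_mul {f : ℝ → ℝ} {t : ℝ} (ht : t ∈ Icc a b) :
    leftRLint a α f t = ∫ τ in Ioc a b, leftRLKernel a α (t, τ) * f τ := by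
  simp_rw [leftRLKernel_apply, ← indicator_mul_left]
  rw [integral_indicator measurableSet_Ioc, Measure.restrict_restrict measurableSet_Ioc,
    inter_eq_left.2 (Ioc_subset_Ioc_right ht.2), leftRLint, intervalIntegral.integral_of_le ht.1]
  rfl

theorem abs_leftRLKernel_le {t τ : ℝ} (hc : 0 < c) (hα : c ≤ α t τ ∧ α t τ < 1) :
    |leftRLKernel a α (t, τ)| ≤ rlMajorant c (t - τ) := by
  rw [leftRLKernel_apply]
  by_cases hτ : τ ∈ Ioc a t
  · have hk₀ : 0 ≤ rlKernel α t τ :=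
      div_nonneg (Real.rpow_nonneg (sub_nonneg.2 hτ.2) _)
        (Real.Gamma_nonneg_of_nonneg (hc.trans_le hα.1).le)
    rw [indicator_of_mem hτ, abs_of_nonneg hk₀]
    exact rpow_sub_one_div_Gamma_le_rlMajorant hc hα.1 hα.2 (sub_nonneg.2 hτ.2)
  · rw [indicator_of_notMem hτ, abs_zero]
    exact rlMajorant_nonneg _

theorem leftRLKernel_column_bound {τ : ℝ} (hαm : Measurable (Function.uncurry α)) (hc : 0 < c)
    (hα : ∀ t ∈ Icc a b, c ≤ α t τ ∧ α t τ < 1) (hτ : τ ∈ Icc a b) :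
    IntegrableOn (fun t => leftRLKernel a α (t, τ)) (Icc a b) ∧
      ∫ t in Icc a b, |leftRLKernel a α (t, τ)| ≤ 1 / c + max (b - a - 1) 0 := by
  have hab : a ≤ b := hτ.1.trans hτ.2
  have hM : IntegrableOn (fun t => rlMajorant c (t - τ)) (Icc a b) := by
    have := ((locallyIntegrable_rlMajorant hc).integrableOn_isCompact
      isCompact_uIcc).intervalIntegrable.comp_sub_right (a := a - τ) (b := b - τ) τ
    rw [sub_add_cancel, sub_add_cancel] at this
    exact (intervalIntegrable_iff_integrableOn_Icc_of_le hab).1 this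
  have hle : ∀ t ∈ Icc a b, |leftRLKernel a α (t, τ)| ≤ rlMajorant c (t - τ) :=
    fun t ht => abs_leftRLKernel_le hc (hα t ht)
  have hK : IntegrableOn (fun t => leftRLKernel a α (t, τ)) (Icc a b) :=
    hM.mono' (measurable_leftRLKernel hαm |>.comp measurable_prodMk_right).aestronglyMeasurable
      ((ae_restrict_iff' measurableSet_Icc).2 (ae_of_all _ hle))
  refine ⟨hK, ?_⟩
  calc ∫ t in Icc a b, |leftRLKernel a α (t, τ)|
      ≤ ∫ t in Icc a b, rlMajorant c (t - τ) := setIntegral_mono_on hK.abs hM measurableSet_Icc hle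
    _ = ∫ x in Ioc (a - τ) (b - τ), rlMajorant c x := by
        rw [integral_Icc_eq_integral_Ioc, ← intervalIntegral.integral_of_le hab,
          intervalIntegral.integral_comp_sub_right, intervalIntegral.integral_of_le (by linarith)]
    _ ≤ 1 / c + max (b - τ - 1) 0 := setIntegral_rlMajorant_le hc fun x hx => hx.2
    _ ≤ 1 / c + max (b - a - 1) 0 := by gcongr; exact hτ.1

end Kernel

section LOneBound

variable {a b c : ℝ} {α : ℝ → ℝ → ℝ} {f : ℝ → ℝ} (hαm : Measurable (Function.uncurry α))
  (hc : 0 < c) (hα : ∀ t ∈ Icc a b, ∀ τ ∈ Icc a b, c ≤ α t τ ∧ α t τ < 1)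
include hαm hc hα

theorem ae_leftRLKernel_column_bound :
    ∀ᵐ τ ∂(volume.restrict (Ioc a b)),
      IntegrableOn (fun t => leftRLKernel a α (t, τ)) (Icc a b) ∧
        ∫ t in Icc a b, |leftRLKernel a α (t, τ)| ≤ 1 / c + max (b - a - 1) 0 :=
  (ae_restrict_iff' measurableSet_Ioc).2 <| ae_of_all _ fun τ hτ =>
    leftRLKernel_column_bound hαm hc (fun t ht => hα t ht τ (Ioc_subset_Icc_self hτ))
      (Ioc_subset_Icc_self hτ)

theorem integrable_leftRLKernel_mul (hf : IntegrableOn f (Ioc a b)) :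
    Integrable (fun p => leftRLKernel a α p * f p.2)
      ((volume.restrict (Icc a b)).prod (volume.restrict (Ioc a b))) :=
  integrable_kernel_mul (measurable_leftRLKernel hαm).aestronglyMeasurable hf
    (ae_leftRLKernel_column_bound hαm hc hα)

theorem integrableOn_leftRLint (hf : IntegrableOn f (Ioc a b)) :
    IntegrableOn (leftRLint a α f) (Icc a b) :=
  (integrable_leftRLKernel_mul hαm hc hα hf).integral_prod_left.congr <|
    (ae_restrict_iff' measurableSet_Icc).2 <| ae_of_all _ fun _ ht =>
      (leftRLint_eq_integral_leftRLKernel_mul ht).symm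

theorem ae_intervalIntegrable_rlKernel_mul (hf : IntegrableOn f (Ioc a b)) :
    ∀ᵐ t ∂(volume.restrict (Icc a b)),
      IntervalIntegrable (fun τ => rlKernel α t τ * f τ) volume a t := by
  filter_upwards [(integrable_leftRLKernel_mul hαm hc hα hf).prod_right_ae,
    ae_restrict_mem measurableSet_Icc] with t hint ht
  simp_rw [leftRLKernel_apply, ← indicator_mul_left] at hint
  rw [integrable_indicator_iff measurableSet_Ioc, IntegrableOn,
    Measure.restrict_restrict measurableSet_Ioc,
    inter_eq_left.2 (Ioc_subset_Ioc_right ht.2)] at hint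
  exact (intervalIntegrable_iff_integrableOn_Ioc_of_le ht.1).2 hint

theorem integral_abs_leftRLint_le (hab : a ≤ b) (hf : IntegrableOn f (Ioc a b)) :
    ∫ t in a..b, |leftRLint a α f t| ≤ (1 / c + max (b - a - 1) 0) * ∫ t in a..b, |f t| := by
  rw [intervalIntegral.integral_of_le hab, intervalIntegral.integral_of_le hab,
    ← integral_Icc_eq_integral_Ioc]
  calc ∫ t in Icc a b, |leftRLint a α f t|
      = ∫ t in Icc a b, |∫ τ in Ioc a b, leftRLKernel a α (t, τ) * f τ| :=
        setIntegral_congr_fun measurableSet_Icc fun t ht => by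
          rw [leftRLint_eq_integral_leftRLKernel_mul ht]
    _ ≤ _ := integral_abs_integral_kernel_mul_le (measurable_leftRLKernel hαm).aestronglyMeasurable
        hf (ae_leftRLKernel_column_bound hαm hc hα)

end LOneBound

/-- For a measurable variable order `α` with `1/n < α(t,τ) < 1` on `[a,b]²` (`n ≥ 2`),
the left Riemann–Liouville integral of variable order `α` maps `L¹[a,b]` into
`L¹[a,b]`, is linear, and is bounded with operator norm strictly below `n + b − a`:
`‖ₐI^α_t f‖_{L¹} < (n + b − a)·‖f‖_{L¹}` for every nonzero `f ∈ L¹[a,b]`. -/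
theorem leftRLint_linear_bounded (a b : ℝ) (hab : a < b) (n : ℕ) (hn : 2 ≤ n)
    (α : ℝ → ℝ → ℝ) (hαm : Measurable (Function.uncurry α))
    (hα : ∀ t ∈ Set.Icc a b, ∀ τ ∈ Set.Icc a b, 1 / (n : ℝ) < α t τ ∧ α t τ < 1) :
    -- maps L¹[a,b] into L¹[a,b]
    (∀ f : ℝ → ℝ, IntegrableOn f (Set.Icc a b) →
        IntegrableOn (leftRLint a α f) (Set.Icc a b)) ∧
    -- additivity (as elements of L¹, i.e. almost everywhere on [a,b])
    (∀ f g : ℝ → ℝ, IntegrableOn f (Set.Icc a b) → IntegrableOn g (Set.Icc a b) →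
        ∀ᵐ t ∂(volume.restrict (Set.Icc a b)),
          leftRLint a α (f + g) t = leftRLint a α f t + leftRLint a α g t) ∧
    -- homogeneity
    (∀ f : ℝ → ℝ, ∀ c : ℝ, ∀ t : ℝ, leftRLint a α (c • f) t = c * leftRLint a α f t) ∧
    -- boundedness, with norm strictly less than n + b − a
    (∀ f : ℝ → ℝ, IntegrableOn f (Set.Icc a b) →
        0 < ∫ t in a..b, |f t| →
        (∫ t in a..b, |leftRLint a α f t|) < ((n : ℝ) + b - a) * ∫ t in a..b, |f t|) := by
  have hc : (0 : ℝ) < 1 / n := by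
    have : (2 : ℝ) ≤ n := by exact_mod_cast hn
    positivity
  have hα' : ∀ t ∈ Icc a b, ∀ τ ∈ Icc a b, 1 / (n : ℝ) ≤ α t τ ∧ α t τ < 1 :=
    fun t ht τ hτ => ⟨(hα t ht τ hτ).1.le, (hα t ht τ hτ).2⟩
  have hIoc {f : ℝ → ℝ} (hf : IntegrableOn f (Icc a b)) : IntegrableOn f (Ioc a b) :=
    hf.mono_set Ioc_subset_Icc_self
  refine ⟨fun f hf => integrableOn_leftRLint hαm hc hα' (hIoc hf), fun f g hf hg => ?_,
    fun f k t => leftRLint_smul f k t, fun f hf hpos => ?_⟩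
  · filter_upwards [ae_intervalIntegrable_rlKernel_mul hαm hc hα' (hIoc hf),
      ae_intervalIntegrable_rlKernel_mul hαm hc hα' (hIoc hg)] with t htf htg
    exact leftRLint_add htf htg
  · calc ∫ t in a..b, |leftRLint a α f t|
        ≤ (1 / (1 / n) + max (b - a - 1) 0) * ∫ t in a..b, |f t| :=
          integral_abs_leftRLint_le hαm hc hα' hab.le (hIoc hf)
      _ < (n + b - a) * ∫ t in a..b, |f t| := by
          gcongr
          rw [one_div_one_div]
          linarith [max_lt (by linarith : b - a - 1 < b - a) (sub_pos.2 hab)]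
end

section
/- Let a < b be real numbers, let n ∈ ℕ with n ≥ 2, let α : [a,b] × [a,b] → ℝ satisfy 1/n < α(t,τ) < 1 for all t, τ ∈ [a,b], and let f, g : [a,b] → ℝ be continuous. Then ∫_a^b g(t) · (ₐI^{α}_t f)(t) dt = ∫_a^b f(t) · (ₜI^{α}_b g)(t) dt, where (ₐI^{α}_t f)(t) = ∫_a^t (t−τ)^{α(t,τ)−1} / Γ(α(t,τ)) · f(τ) dτ and (ₜI^{α}_b g)(t) = ∫_t^b (τ−t)^{α(τ,t)−1} / Γ(α(τ,t)) · g(τ) dτ. -/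
open MeasureTheory Set Function

/-!
Both sides are the integral of `g t * k(t, τ) * f τ`, with `k(t, τ) = (t - τ)^(α - 1) / Γ(α)`,
over the triangle `a < τ < t ≤ b`, taken in the two possible orders, so the identity is Fubini's
theorem. Fubini applies because `Γ ≥ 1` on `(0, 1]` and `α ≥ 1/n` give the weakly singular bound
`|k(t, τ)| ≤ (t - τ)^(1/n - 1) + 1`, and a function of `t - τ` that is integrable on `[0, b - a]`
is integrable on the triangle: the shear `(t, τ) ↦ (t - τ, τ)` maps it into `[0, b - a] × [a, b]`.
-/

namespace Real

theorem measurable_Gamma_s1 : Measurable Gamma := by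
  refine ContinuousOn.measurable_of_countable_compl (s := {x | ∀ m : ℕ, x ≠ -m})
    (fun x hx => (differentiableAt_Gamma hx).continuousAt.continuousWithinAt) ?_
  convert countable_range fun m : ℕ => -(m : ℝ) using 1
  ext x
  simp [eq_comm]

theorem one_le_Gamma_of_mem_Ioc_s1 {s : ℝ} (hs : s ∈ Ioc 0 1) : 1 ≤ Gamma s :=
  Gamma_one ▸ Gamma_strictAntiOn_Ioc.antitoneOn hs ⟨one_pos, le_rfl⟩ hs.2

theorem rpow_le_rpow_add_rpow {x p q r : ℝ} (hx : 0 < x) (hpq : p ≤ q) (hqr : q ≤ r) :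
    x ^ q ≤ x ^ p + x ^ r := by
  rcases le_total x 1 with h | h
  · exact (rpow_le_rpow_of_exponent_ge hx h hpq).trans
      (le_add_of_nonneg_right (rpow_nonneg hx.le r))
  · exact (rpow_le_rpow_of_exponent_le h hqr).trans
      (le_add_of_nonneg_left (rpow_nonneg hx.le p))

theorem norm_rpow_sub_one_div_Gamma_le {x c s : ℝ} (hx : 0 < x) (hcs : c ≤ s)
    (hs : s ∈ Ioc 0 1) : ‖x ^ (s - 1) / Gamma s‖ ≤ x ^ (c - 1) + 1 := by
  have hΓ := one_le_Gamma_of_mem_Ioc_s1 hs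
  rw [norm_of_nonneg (div_nonneg (rpow_nonneg hx.le _) (zero_le_one.trans hΓ))]
  calc x ^ (s - 1) / Gamma s ≤ x ^ (s - 1) := div_le_self (rpow_nonneg hx.le _) hΓ
    _ ≤ x ^ (c - 1) + x ^ (0 : ℝ) := rpow_le_rpow_add_rpow hx (by linarith) (by linarith [hs.2])
    _ = x ^ (c - 1) + 1 := by rw [rpow_zero]

end Real

def triangle (a b : ℝ) : Set (ℝ × ℝ) := {z | a < z.2 ∧ z.2 < z.1 ∧ z.1 ≤ b}

theorem measurableSet_triangle (a b : ℝ) : MeasurableSet (triangle a b) :=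
  (measurableSet_lt measurable_const measurable_snd).inter
    ((measurableSet_lt measurable_snd measurable_fst).inter
      (measurableSet_le measurable_fst measurable_const))

theorem integrableOn_triangle_of_norm_le {E : Type*} [NormedAddCommGroup E] {a b : ℝ}
    {H : ℝ × ℝ → E} {φ : ℝ → ℝ} (hφ : IntegrableOn φ (Icc 0 (b - a)))
    (hH : AEStronglyMeasurable H (volume.restrict (triangle a b)))
    (hle : ∀ z ∈ triangle a b, ‖H z‖ ≤ φ (z.1 - z.2)) : IntegrableOn H (triangle a b) := by
  set S : Set (ℝ × ℝ) := Icc 0 (b - a) ×ˢ Icc a b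
  have hS : IntegrableOn (fun w : ℝ × ℝ => φ w.1 * 1) S := by
    rw [IntegrableOn, Measure.volume_eq_prod, ← Measure.prod_restrict]
    exact hφ.mul_prod (integrableOn_const (by simp))
  have hshear := (measurePreserving_sub_prod (volume : Measure ℝ) volume).restrict_preimage
    (measurableSet_Icc.prod measurableSet_Icc : MeasurableSet S)
  rw [← Measure.volume_eq_prod] at hshear
  have hsub : triangle a b ⊆ (fun z : ℝ × ℝ => (z.1 - z.2, z.2)) ⁻¹' S :=
    fun z ⟨h1, h2, h3⟩ => ⟨⟨by linarith, by linarith⟩, by constructor <;> linarith⟩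
  refine Integrable.mono' (IntegrableOn.mono_set (hshear.integrable_comp_of_integrable hS) hsub)
    hH ?_
  filter_upwards [ae_restrict_mem (measurableSet_triangle a b)] with z hz
  simpa using hle z hz

section Swap

variable {E : Type*} [NormedAddCommGroup E] [NormedSpace ℝ E] {a b : ℝ} {H : ℝ → ℝ → E}

theorem integral_indicator_triangle_left (t : ℝ) :
    ∫ τ, (triangle a b).indicator (uncurry H) (t, τ) =
      (Ioc a b).indicator (fun t => ∫ τ in a..t, H t τ) t := by
  by_cases ht : t ∈ Ioc a b
  · have hsec : (fun τ => (triangle a b).indicator (uncurry H) (t, τ)) =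
        (Ioo a t).indicator (H t) := by
      ext τ
      simp [triangle, indicator, ht.2]
    rw [indicator_of_mem ht, hsec, integral_indicator measurableSet_Ioo,
      intervalIntegral.integral_of_le ht.1.le, integral_Ioc_eq_integral_Ioo]
  · rw [indicator_of_notMem ht]
    refine integral_eq_zero_of_ae (Filter.Eventually.of_forall fun τ => ?_)
    exact indicator_of_notMem (fun h => ht ⟨h.1.trans h.2.1, h.2.2⟩) _

theorem integral_indicator_triangle_right (τ : ℝ) :
    ∫ t, (triangle a b).indicator (uncurry H) (t, τ) =
      (Ioc a b).indicator (fun τ => ∫ t in τ..b, H t τ) τ := by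
  by_cases hτ : τ ∈ Ioc a b
  · have hsec : (fun t => (triangle a b).indicator (uncurry H) (t, τ)) =
        (Ioc τ b).indicator (fun t => H t τ) := by
      ext t
      simp [triangle, indicator, hτ.1]
    rw [indicator_of_mem hτ, hsec, integral_indicator measurableSet_Ioc,
      intervalIntegral.integral_of_le hτ.2]
  · rw [indicator_of_notMem hτ]
    refine integral_eq_zero_of_ae (Filter.Eventually.of_forall fun t => ?_)
    exact indicator_of_notMem (fun h => hτ ⟨h.1, h.2.1.le.trans h.2.2⟩) _

theorem intervalIntegral_integral_swap_triangle (hab : a ≤ b)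
    (hH : IntegrableOn (uncurry H) (triangle a b)) :
    ∫ t in a..b, ∫ τ in a..t, H t τ = ∫ τ in a..b, ∫ t in τ..b, H t τ := by
  have hswap := integral_integral_swap
    (f := fun t τ => (triangle a b).indicator (uncurry H) (t, τ)) (by
      rw [← Measure.volume_eq_prod]
      exact (integrable_indicator_iff (measurableSet_triangle a b)).2 hH)
  simp only [integral_indicator_triangle_left, integral_indicator_triangle_right,
    integral_indicator measurableSet_Ioc] at hswap
  rwa [intervalIntegral.integral_of_le hab, intervalIntegral.integral_of_le hab]

end Swap

theorem integrableOn_triangle_mul_rpow_div_Gamma_mul {a b c : ℝ} (hc : 0 < c)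
    {α : ℝ → ℝ → ℝ} (hαm : Measurable (uncurry α))
    (hα : ∀ t ∈ Icc a b, ∀ τ ∈ Icc a b, c ≤ α t τ ∧ α t τ ≤ 1)
    {f g : ℝ → ℝ} (hf : ContinuousOn f (Icc a b)) (hg : ContinuousOn g (Icc a b)) :
    IntegrableOn
      (uncurry fun t τ => g t * ((t - τ) ^ (α t τ - 1) / Real.Gamma (α t τ) * f τ))
      (triangle a b) := by
  obtain ⟨Mf, hMf⟩ := isCompact_Icc.exists_bound_of_continuousOn hf
  obtain ⟨Mg, hMg⟩ := isCompact_Icc.exists_bound_of_continuousOn hg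
  have hmem : ∀ z ∈ triangle a b, z.1 ∈ Icc a b ∧ z.2 ∈ Icc a b :=
    fun z ⟨h1, h2, h3⟩ => ⟨⟨by linarith, h3⟩, ⟨h1.le, by linarith⟩⟩
  have hK : Measurable fun z : ℝ × ℝ => (z.1 - z.2) ^ (α z.1 z.2 - 1) / Real.Gamma (α z.1 z.2) :=
    ((measurable_fst.sub measurable_snd).pow (hαm.sub_const 1)).div
      (Real.measurable_Gamma_s1.comp hαm)
  refine integrableOn_triangle_of_norm_le (φ := fun x => Mg * ((x ^ (c - 1) + 1) * Mf)) ?_ ?_ ?_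
  · have hrpow : IntegrableOn (fun x : ℝ => x ^ (c - 1)) (Icc 0 (b - a)) := by
      rw [integrableOn_Icc_iff_integrableOn_Ioc]
      exact (intervalIntegral.intervalIntegrable_rpow' (by linarith)).1
    exact ((hrpow.add (integrableOn_const (by simp))).mul_const Mf).const_mul Mg
  · refine ((hg.comp continuousOn_fst fun z hz => (hmem z hz).1).aestronglyMeasurable
      (measurableSet_triangle a b)).mul (hK.aestronglyMeasurable.mul ?_)
    exact (hf.comp continuousOn_snd fun z hz => (hmem z hz).2).aestronglyMeasurable
      (measurableSet_triangle a b)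
  · intro z hz
    obtain ⟨ht, hτ⟩ := hmem z hz
    obtain ⟨hcα, hα1⟩ := hα z.1 ht z.2 hτ
    have hx : 0 < z.1 - z.2 := sub_pos.2 hz.2.1
    change ‖g z.1 * _‖ ≤ _
    rw [norm_mul, norm_mul]
    gcongr
    · exact (norm_nonneg _).trans (hMg z.1 ht)
    · exact hMg z.1 ht
    · exact Real.norm_rpow_sub_one_div_Gamma_le hx hcα ⟨hc.trans_le hcα, hα1⟩
    · exact hMf z.2 hτ

/-- Integration by parts for variable order Riemann–Liouville integrals: for a
measurable order `α` with `1/n < α(t,τ) < 1` on `[a,b]²` (`n ≥ 2`) and continuous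
`f, g : [a,b] → ℝ`,
`∫_a^b g(t)·(ₐI^α_t f)(t) dt = ∫_a^b f(t)·(ₜI^α_b g)(t) dt`. -/
theorem leftRLint_int_by_parts (a b : ℝ) (hab : a < b) (n : ℕ) (hn : 2 ≤ n)
    (α : ℝ → ℝ → ℝ) (hαm : Measurable (Function.uncurry α))
    (hα : ∀ t ∈ Set.Icc a b, ∀ τ ∈ Set.Icc a b, 1 / (n : ℝ) < α t τ ∧ α t τ < 1)
    (f g : ℝ → ℝ) (hf : ContinuousOn f (Set.Icc a b))
    (hg : ContinuousOn g (Set.Icc a b)) :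
    (∫ t in a..b,
        g t * ∫ τ in a..t, (t - τ) ^ (α t τ - 1) / Real.Gamma (α t τ) * f τ) =
      ∫ t in a..b,
        f t * ∫ τ in t..b, (τ - t) ^ (α τ t - 1) / Real.Gamma (α τ t) * g τ := by
  have hn0 : (0 : ℝ) < n := by exact_mod_cast zero_lt_two.trans_le hn
  have hint := integrableOn_triangle_mul_rpow_div_Gamma_mul (one_div_pos.2 hn0) hαm
    (fun t ht τ hτ => ⟨(hα t ht τ hτ).1.le, (hα t ht τ hτ).2.le⟩) hf hg
  simp_rw [← intervalIntegral.integral_const_mul]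
  rw [intervalIntegral_integral_swap_triangle hab.le hint]
  exact intervalIntegral.integral_congr fun τ _ =>
    intervalIntegral.integral_congr fun t _ => by ring
end

section
/- Let a < b be real numbers, let n ∈ ℕ with n ≥ 2, and let α : [a,b] × [a,b] → ℝ satisfy 0 < α(t,τ) < 1 − 1/n for all t, τ ∈ [a,b]. Let f : [a,b] → ℝ be continuously differentiable, let g : [a,b] → ℝ be continuous, and assume the function t ↦ (ₜI^{1−α}_b g)(t) = ∫_t^b (τ−t)^{−α(τ,t)} / Γ(1−α(τ,t)) · g(τ) dτ is absolutely continuous on [a,b]. Then ∫_a^b g(t) · (ᶜₐD^{α}_t f)(t) dt = [ f(t) · (ₜI^{1−α}_b g)(t) ]_{t=a}^{t=b} + ∫_a^b f(t) · (ₜD^{α}_b g)(t) dt, where (ᶜₐD^{α}_t f)(t) = ∫_a^t (t−τ)^{−α(t,τ)} / Γ(1−α(t,τ)) · f′(τ) dτ and (ₜD^{α}_b g)(t) = −(d/dt)(ₜI^{1−α}_b g)(t). -/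
/-!
Write `k(t,τ) = (t−τ)^(−α(t,τ)) / Γ(1−α(t,τ))` and `I = ₜI^{1−α}_b g`. Both `∫ g·ᶜₐD^α_t f` and
`∫ f'·I` are integrals of `g(t) k(t,τ) f'(τ)` over the triangle `a ≤ τ ≤ t ≤ b`, in the two
orders of integration. Fubini applies because `Γ ≥ 1` on `(0,1]` and `α ≤ 1 − 1/n` bound the
kernel by `(t−τ)^(−(1−1/n)) + 1`, which is integrable on the triangle. Since `I` is absolutely
continuous and `f` is `C¹`, integration by parts for absolutely continuous functions turns
`∫ f'·I` into `[f·I]_a^b − ∫ f·I'`.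
-/

open MeasureTheory

/-- The right Riemann–Liouville integral of variable fractional order `1 − α`:
`(ₜI^{1−α}_b g)(t) = ∫_t^b (τ−t)^(−α(τ,t))/Γ(1−α(τ,t)) · g(τ) dτ`. -/
noncomputable def rightRLint1m (b : ℝ) (α : ℝ → ℝ → ℝ) (g : ℝ → ℝ) (t : ℝ) : ℝ :=
  ∫ τ in t..b, (τ - t) ^ (-α τ t) / Real.Gamma (1 - α τ t) * g τ

/-- The left Caputo derivative of variable fractional order `α` of a `C¹`
function with derivative `f'`:
`(ᶜₐD^α_t f)(t) = ∫_a^t (t−τ)^(−α(t,τ))/Γ(1−α(t,τ)) · f'(τ) dτ`. -/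
noncomputable def leftCaputo (a : ℝ) (α : ℝ → ℝ → ℝ) (f' : ℝ → ℝ) (t : ℝ) : ℝ :=
  ∫ τ in a..t, (t - τ) ^ (-α t τ) / Real.Gamma (1 - α t τ) * f' τ

open Set

theorem Real.continuous_inv_Gamma : Continuous fun s : ℝ => (Real.Gamma s)⁻¹ := by
  convert Complex.continuous_re.comp
    (Complex.differentiable_one_div_Gamma.continuous.comp Complex.continuous_ofReal) using 2
  simp only [Function.comp_apply, Complex.Gamma_ofReal, ← Complex.ofReal_inv, Complex.ofReal_re]

theorem Real.one_le_Gamma {s : ℝ} (hs₀ : 0 < s) (hs₁ : s ≤ 1) : 1 ≤ Real.Gamma s :=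
  Real.Gamma_one ▸ Real.Gamma_strictAntiOn_Ioc.antitoneOn ⟨hs₀, hs₁⟩ ⟨one_pos, le_rfl⟩ hs₁

theorem Real.rpow_neg_le_rpow_neg_add_one {x α c : ℝ} (hx : 0 ≤ x) (hα : 0 ≤ α) (hαc : α ≤ c) :
    x ^ (-α) ≤ x ^ (-c) + 1 := by
  rcases hx.eq_or_lt with rfl | hx
  · linarith [Real.zero_rpow_le_one (-α), Real.rpow_nonneg le_rfl (-c)]
  rcases le_total x 1 with hx1 | hx1
  · linarith [Real.rpow_le_rpow_of_exponent_ge hx hx1 (neg_le_neg hαc)]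
  · linarith [Real.rpow_le_one_of_one_le_of_nonpos hx1 (neg_nonpos.mpr hα),
      Real.rpow_nonneg hx.le (-c)]

def lowerTriangle (a b : ℝ) : Set (ℝ × ℝ) := {p | a ≤ p.2 ∧ p.2 ≤ p.1 ∧ p.1 ≤ b}

theorem lowerTriangle_subset_Icc_prod_Icc (a b : ℝ) :
    lowerTriangle a b ⊆ Icc a b ×ˢ Icc a b :=
  fun _ ⟨h₁, h₂, h₃⟩ => ⟨⟨h₁.trans h₂, h₃⟩, ⟨h₁, h₂.trans h₃⟩⟩

theorem isCompact_lowerTriangle (a b : ℝ) : IsCompact (lowerTriangle a b) :=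
  (isCompact_Icc.prod isCompact_Icc).of_isClosed_subset
    ((isClosed_le continuous_const continuous_snd).inter
      ((isClosed_le continuous_snd continuous_fst).inter
        (isClosed_le continuous_fst continuous_const)))
    (lowerTriangle_subset_Icc_prod_Icc a b)

theorem measurableSet_lowerTriangle (a b : ℝ) : MeasurableSet (lowerTriangle a b) :=
  (isCompact_lowerTriangle a b).isClosed.measurableSet

/-- On the triangle the integrand is `1_{[a,b]}(τ) · φ(t − τ)` with `φ = 1_{[0,b−a]} · x^(−c)`,
a convolution integrand of two integrable functions. -/
theorem integrableOn_lowerTriangle_sub_rpow_neg {a b c : ℝ} (hc : c < 1) :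
    IntegrableOn (fun p : ℝ × ℝ => (p.1 - p.2) ^ (-c)) (lowerTriangle a b) := by
  have hpow : Integrable ((Icc 0 (b - a)).indicator fun x : ℝ => x ^ (-c)) := by
    rw [integrable_indicator_iff measurableSet_Icc, integrableOn_Icc_iff_integrableOn_Ioc]
    exact (intervalIntegral.intervalIntegrable_rpow' (by linarith)).1
  have hone : Integrable ((Icc a b).indicator fun _ : ℝ => (1 : ℝ)) :=
    (integrable_indicator_iff measurableSet_Icc).mpr (integrableOn_const measure_Icc_lt_top.ne)
  have hconv := hone.convolution_integrand (ContinuousLinearMap.mul ℝ ℝ) hpow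
  rw [← Measure.volume_eq_prod] at hconv
  refine hconv.integrableOn.congr_fun (fun p hp => ?_) (measurableSet_lowerTriangle a b)
  obtain ⟨h₁, h₂, h₃⟩ := hp
  simp only [indicator_of_mem (show p.2 ∈ Icc a b from ⟨h₁, h₂.trans h₃⟩),
    indicator_of_mem (show p.1 - p.2 ∈ Icc 0 (b - a) from ⟨sub_nonneg.mpr h₂, by linarith⟩),
    ContinuousLinearMap.mul_apply', one_mul]

theorem integrableOn_lowerTriangle_of_norm_le {E : Type*} [NormedAddCommGroup E]
    {k : ℝ × ℝ → E} {a b c C : ℝ} (hc : c < 1)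
    (hk : AEStronglyMeasurable k (volume.restrict (lowerTriangle a b)))
    (hbound : ∀ p ∈ lowerTriangle a b, ‖k p‖ ≤ C * ((p.1 - p.2) ^ (-c) + 1)) :
    IntegrableOn k (lowerTriangle a b) :=
  Integrable.mono' (((integrableOn_lowerTriangle_sub_rpow_neg hc).add
      (integrableOn_const ((isCompact_lowerTriangle a b).measure_lt_top.ne))).const_mul C) hk
    (ae_restrict_of_forall_mem (measurableSet_lowerTriangle a b) hbound)

theorem integral_indicator_Icc_eq_intervalIntegral {E : Type*} [NormedAddCommGroup E]
    [NormedSpace ℝ E] {f : ℝ → E} {x y : ℝ} (hxy : x ≤ y) :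
    ∫ s, (Icc x y).indicator f s = ∫ s in x..y, f s := by
  rw [integral_indicator measurableSet_Icc, integral_Icc_eq_integral_Ioc,
    intervalIntegral.integral_of_le hxy]

theorem integral_integral_swap_lowerTriangle {E : Type*} [NormedAddCommGroup E]
    [NormedSpace ℝ E] {k : ℝ → ℝ → E} {a b : ℝ} (hab : a ≤ b)
    (hk : IntegrableOn (Function.uncurry k) (lowerTriangle a b)) :
    ∫ t in a..b, ∫ τ in a..t, k t τ = ∫ τ in a..b, ∫ t in τ..b, k t τ := by
  set F := (lowerTriangle a b).indicator (Function.uncurry k)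
  have hF : Integrable F (volume.prod volume) := by
    rw [← Measure.volume_eq_prod]
    exact (integrable_indicator_iff (measurableSet_lowerTriangle a b)).mpr hk
  have hrow : ∀ t, ∫ τ, F (t, τ) = (Icc a b).indicator (fun t => ∫ τ in a..t, k t τ) t := by
    intro t
    by_cases ht : t ∈ Icc a b
    · rw [indicator_of_mem ht, ← integral_indicator_Icc_eq_intervalIntegral ht.1]
      congr 1 with τ
      simp only [F, lowerTriangle, indicator_apply, mem_ofPred_eq, mem_Icc, ht.2, and_true]
      rfl
    · rw [indicator_of_notMem ht]
      refine integral_eq_zero_of_ae (.of_forall fun τ => indicator_of_notMem ?_ _)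
      exact fun ⟨h₁, h₂, h₃⟩ => ht ⟨h₁.trans h₂, h₃⟩
  have hcol : ∀ τ, ∫ t, F (t, τ) = (Icc a b).indicator (fun τ => ∫ t in τ..b, k t τ) τ := by
    intro τ
    by_cases hτ : τ ∈ Icc a b
    · rw [indicator_of_mem hτ, ← integral_indicator_Icc_eq_intervalIntegral hτ.2]
      congr 1 with t
      simp only [F, lowerTriangle, indicator_apply, mem_ofPred_eq, mem_Icc, hτ.1, true_and]
      rfl
    · rw [indicator_of_notMem hτ]
      refine integral_eq_zero_of_ae (.of_forall fun t => indicator_of_notMem ?_ _)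
      exact fun ⟨h₁, h₂, h₃⟩ => hτ ⟨h₁, h₂.trans h₃⟩
  calc ∫ t in a..b, ∫ τ in a..t, k t τ = ∫ t, ∫ τ, F (t, τ) := by
        simp_rw [hrow, integral_indicator_Icc_eq_intervalIntegral hab]
    _ = ∫ τ, ∫ t, F (t, τ) := integral_integral_swap hF
    _ = ∫ τ in a..b, ∫ t in τ..b, k t τ := by
        simp_rw [hcol, integral_indicator_Icc_eq_intervalIntegral hab]

noncomputable def varOrderKernel (α : ℝ → ℝ → ℝ) (t τ : ℝ) : ℝ :=
  (t - τ) ^ (-α t τ) / Real.Gamma (1 - α t τ)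

theorem measurable_varOrderKernel {α : ℝ → ℝ → ℝ} (hα : Measurable (Function.uncurry α)) :
    Measurable (Function.uncurry (varOrderKernel α)) :=
  ((measurable_fst.sub measurable_snd).pow hα.neg).div
    (Real.measurable_Gamma.comp (measurable_const.sub hα))

theorem norm_varOrderKernel_le {α : ℝ → ℝ → ℝ} {t τ c : ℝ} (hτt : τ ≤ t) (hα₀ : 0 ≤ α t τ)
    (hαc : α t τ ≤ c) (hc : c < 1) : ‖varOrderKernel α t τ‖ ≤ (t - τ) ^ (-c) + 1 := by
  have hΓ : 1 ≤ Real.Gamma (1 - α t τ) := Real.one_le_Gamma (by linarith) (by linarith)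
  have hpow : 0 ≤ (t - τ) ^ (-α t τ) := Real.rpow_nonneg (sub_nonneg.mpr hτt) _
  rw [varOrderKernel, Real.norm_of_nonneg (div_nonneg hpow (zero_le_one.trans hΓ))]
  exact (div_le_self hpow hΓ).trans
    (Real.rpow_neg_le_rpow_neg_add_one (sub_nonneg.mpr hτt) hα₀ hαc)

theorem integral_mul_leftCaputo_eq_integral_mul_rightRLint1m {a b c : ℝ} (hab : a ≤ b)
    (hc : c < 1) {α : ℝ → ℝ → ℝ} (hαm : Measurable (Function.uncurry α))
    (hα : ∀ t ∈ Icc a b, ∀ τ ∈ Icc a b, 0 ≤ α t τ ∧ α t τ ≤ c) {f' g : ℝ → ℝ}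
    (hf' : ContinuousOn f' (Icc a b)) (hg : ContinuousOn g (Icc a b)) :
    ∫ t in a..b, g t * leftCaputo a α f' t = ∫ τ in a..b, f' τ * rightRLint1m b α g τ := by
  have hgf' : ContinuousOn (fun p : ℝ × ℝ => g p.1 * f' p.2) (lowerTriangle a b) :=
    (hg.comp continuousOn_fst fun p hp => (lowerTriangle_subset_Icc_prod_Icc a b hp).1).mul
      (hf'.comp continuousOn_snd fun p hp => (lowerTriangle_subset_Icc_prod_Icc a b hp).2)
  obtain ⟨M, hM⟩ := (isCompact_lowerTriangle a b).exists_bound_of_continuousOn hgf'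
  have hk : IntegrableOn (fun p : ℝ × ℝ => varOrderKernel α p.1 p.2 * (g p.1 * f' p.2))
      (lowerTriangle a b) := by
    refine integrableOn_lowerTriangle_of_norm_le (C := M) hc
      ((measurable_varOrderKernel hαm).aestronglyMeasurable.mul
        (hgf'.aestronglyMeasurable (measurableSet_lowerTriangle a b))) fun p hp => ?_
    obtain ⟨hp₁, hp₂⟩ := lowerTriangle_subset_Icc_prod_Icc a b hp
    obtain ⟨hα₀, hαc⟩ := hα p.1 hp₁ p.2 hp₂
    rw [norm_mul, mul_comm]
    exact mul_le_mul (hM p hp) (norm_varOrderKernel_le hp.2.1 hα₀ hαc hc) (norm_nonneg _)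
      ((norm_nonneg _).trans (hM p hp))
  calc ∫ t in a..b, g t * leftCaputo a α f' t
      = ∫ t in a..b, ∫ τ in a..t, varOrderKernel α t τ * (g t * f' τ) := by
        refine intervalIntegral.integral_congr fun t _ => ?_
        simp only [leftCaputo, ← intervalIntegral.integral_const_mul]
        congr 1 with τ
        rw [varOrderKernel]
        ring
    _ = ∫ τ in a..b, ∫ t in τ..b, varOrderKernel α t τ * (g t * f' τ) :=
        integral_integral_swap_lowerTriangle hab hk
    _ = ∫ τ in a..b, f' τ * rightRLint1m b α g τ := by
        refine intervalIntegral.integral_congr fun τ _ => ?_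
        simp only [rightRLint1m, ← intervalIntegral.integral_const_mul]
        congr 1 with t
        rw [varOrderKernel]
        ring

theorem AbsolutelyContinuousOnInterval.of_eq_add_integral {φ h : ℝ → ℝ} {a b : ℝ}
    (hh : IntervalIntegrable h volume a b)
    (hφ : ∀ x ∈ uIcc a b, φ x = φ a + ∫ s in a..x, h s) :
    AbsolutelyContinuousOnInterval φ a b := by
  have hprim := hh.absolutelyContinuousOnInterval_intervalIntegral left_mem_uIcc
  rw [absolutelyContinuousOnInterval_iff] at hprim ⊢
  intro ε hε
  obtain ⟨δ, hδ, hsmall⟩ := hprim ε hε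
  refine ⟨δ, hδ, fun E hE hlen => ?_⟩
  convert hsmall E hE hlen using 2 with i hi
  rw [hφ _ (hE.1 i hi).1, hφ _ (hE.1 i hi).2, dist_add_left]

theorem AbsolutelyContinuousOnInterval.of_hasDerivAt {f f' : ℝ → ℝ} {a b : ℝ}
    (hf : ∀ x ∈ uIcc a b, HasDerivAt f (f' x) x) (hf' : IntervalIntegrable f' volume a b) :
    AbsolutelyContinuousOnInterval f a b := by
  refine .of_eq_add_integral hf' fun x hx => ?_
  have hsub : uIcc a x ⊆ uIcc a b := uIcc_subset_uIcc left_mem_uIcc hx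
  rw [intervalIntegral.integral_eq_sub_of_hasDerivAt (fun y hy => hf y (hsub hy))
    (hf'.mono_set hsub)]
  ring

theorem AbsolutelyContinuousOnInterval.integral_mul_deriv_eq_deriv_mul_of_hasDerivAt
    {f f' φ : ℝ → ℝ} {a b : ℝ} (hφ : AbsolutelyContinuousOnInterval φ a b)
    (hf : ∀ x ∈ uIcc a b, HasDerivAt f (f' x) x) (hf' : IntervalIntegrable f' volume a b) :
    ∫ x in a..b, f x * deriv φ x = f b * φ b - f a * φ a - ∫ x in a..b, f' x * φ x := by
  rw [(AbsolutelyContinuousOnInterval.of_hasDerivAt hf hf').integral_mul_deriv_eq_deriv_mul hφ]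
  congr 1
  exact intervalIntegral.integral_congr fun x hx => by rw [(hf x hx).deriv]

/-- Integration by parts for the variable order Caputo derivative: for a measurable
order `α` with `0 < α(t,τ) < 1 − 1/n` (`n ≥ 2`), `f ∈ C¹[a,b]` (with derivative `f'`),
`g` continuous on `[a,b]`, and `t ↦ (ₜI^{1−α}_b g)(t)` absolutely continuous on `[a,b]`
(i.e. the integral of an `L¹` density), one has
`∫_a^b g·ᶜₐD^α_t f = [f·ₜI^{1−α}_b g]_a^b + ∫_a^b f·ₜD^α_b g`,
where `(ₜD^α_b g)(t) = −(d/dt)(ₜI^{1−α}_b g)(t)`. -/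
theorem caputo_int_by_parts (a b : ℝ) (hab : a < b) (n : ℕ) (hn : 2 ≤ n)
    (α : ℝ → ℝ → ℝ) (hαm : Measurable (Function.uncurry α))
    (hα : ∀ t ∈ Set.Icc a b, ∀ τ ∈ Set.Icc a b, 0 < α t τ ∧ α t τ < 1 - 1 / (n : ℝ))
    (f f' : ℝ → ℝ) (hf : ∀ t ∈ Set.Icc a b, HasDerivAt f (f' t) t)
    (hf' : ContinuousOn f' (Set.Icc a b))
    (g : ℝ → ℝ) (hg : ContinuousOn g (Set.Icc a b))
    (hAC : ∃ h : ℝ → ℝ, IntegrableOn h (Set.Icc a b) ∧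
      ∀ t ∈ Set.Icc a b,
        rightRLint1m b α g t = rightRLint1m b α g a + ∫ s in a..t, h s) :
    (∫ t in a..b, g t * leftCaputo a α f' t) =
      (f b * rightRLint1m b α g b - f a * rightRLint1m b α g a) +
        ∫ t in a..b, f t * (-(deriv (rightRLint1m b α g) t)) := by
  obtain ⟨h, hh, hI⟩ := hAC
  have hc : 1 - 1 / (n : ℝ) < 1 :=
    sub_lt_self 1 (one_div_pos.mpr (by exact_mod_cast (by omega : 0 < n)))
  rw [integral_mul_leftCaputo_eq_integral_mul_rightRLint1m hab.le hc hαm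
    (fun t ht τ hτ => ⟨(hα t ht τ hτ).1.le, (hα t ht τ hτ).2.le⟩) hf' hg]
  rw [← uIcc_of_le hab.le] at hf hI
  have hIac : AbsolutelyContinuousOnInterval (rightRLint1m b α g) a b :=
    .of_eq_add_integral ((intervalIntegrable_iff_integrableOn_Icc_of_le hab.le).mpr hh) hI
  simp only [mul_neg, intervalIntegral.integral_neg,
    hIac.integral_mul_deriv_eq_deriv_mul_of_hasDerivAt hf (hf'.intervalIntegrable_of_Icc hab.le)]
  ring
end

section
/- For every x ∈ [0,1], the Gamma function satisfies (x² + 1)/(x + 1) ≤ Γ(x + 1) ≤ (x² + 2)/(x + 2). -/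
/-!
Both bounds are equalities at `x = 0` and `x = 1`, and the proof combines the convexity of `Γ`
with a few numerical values. Log-convexity of `Γ` at points near `64`, carried back by the
functional equation, gives `Γ (1 + s)` to three decimals at `s = 1/8, 1/4, 1/2, 3/4, 7/8`. Since
`t ↦ Γ (t + 1)` is convex, it lies below its chords between consecutive nodes, which gives the
upper bound. For the lower bound, `Γ` lies above its tangent at `2`, of slope `1 - γ` with
`8/15 < γ < 2/3`; this settles `x ≤ 1/3` and `x ≥ 7/8`. In between, `Γ` lies above the secant
through `(2, 1)` and a node to the right of `x + 1`. Each case ends in a polynomial inequality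
on an interval.
-/

open Real Finset
open scoped Nat

theorem ConvexOn.mul_le_chord {S : Set ℝ} {f : ℝ → ℝ} (hf : ConvexOn ℝ S f) {a b x : ℝ}
    (ha : a ∈ S) (hb : b ∈ S) (hax : a ≤ x) (hxb : x ≤ b) :
    (b - a) * f x ≤ (b - x) * f a + (x - a) * f b := by
  rcases hax.eq_or_lt with rfl | hax
  · simp
  rcases hxb.eq_or_lt with rfl | hxb
  · simp
  exact hf.secant_mono_aux1 ha hb hax hxb

theorem ConvexOn.add_mul_sub_le_of_hasDerivAt {S : Set ℝ} {f : ℝ → ℝ} {f' x y : ℝ}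
    (hf : ConvexOn ℝ S f) (hx : x ∈ S) (hy : y ∈ S) (hd : HasDerivAt f f' x) :
    f x + f' * (y - x) ≤ f y := by
  rcases lt_trichotomy y x with hyx | rfl | hxy
  · have h := hf.slope_le_of_hasDerivAt hy hx hyx hd
    rw [slope_def_field, div_le_iff₀ (sub_pos.2 hyx)] at h
    linarith
  · simp
  · have h := hf.le_slope_of_hasDerivAt hx hy hxy hd
    rw [slope_def_field, le_div_iff₀ (sub_pos.2 hxy)] at h
    linarith

namespace Real

theorem rpow_div_le_of_pow_le {a u : ℝ} {k m : ℕ} (ha : 0 ≤ a) (hu : 0 ≤ u) (hm : m ≠ 0)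
    (h : a ^ k ≤ u ^ m) : a ^ ((k : ℝ) / m) ≤ u := by
  rw [div_eq_mul_inv, rpow_mul ha, rpow_natCast]
  calc (a ^ k) ^ (m⁻¹ : ℝ) ≤ (u ^ m) ^ (m⁻¹ : ℝ) := by gcongr
    _ = u := pow_rpow_inv_natCast hu hm

theorem eight_fifteenths_lt_eulerMascheroniConstant : 8 / 15 < eulerMascheroniConstant := by
  refine lt_of_le_of_lt ?_ (eulerMascheroniSeq_lt_eulerMascheroniConstant 15)
  have hH : (harmonic 15 : ℝ) = 1195757 / 360360 := by
    norm_num [harmonic, sum_range_succ]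
  have hlog : log (16 : ℝ) = 4 * log 2 := by
    rw [show (16 : ℝ) = 2 ^ 4 by norm_num, log_pow]; norm_num
  rw [eulerMascheroniSeq, hH]
  norm_num [hlog]
  linarith [log_two_lt_d9]

theorem one_add_mul_sub_two_le_Gamma {t : ℝ} (ht : 0 < t) :
    1 + (1 - eulerMascheroniConstant) * (t - 2) ≤ Gamma t := by
  have hd : HasDerivAt Gamma (1 - eulerMascheroniConstant) 2 := by
    convert hasDerivAt_Gamma_nat 1 using 1 <;> norm_num [sub_eq_neg_add]
  simpa [Gamma_two] using
    convexOn_Gamma.add_mul_sub_le_of_hasDerivAt (by norm_num : (2 : ℝ) ∈ Set.Ioi 0) ht hd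

theorem Gamma_add_nat_eq_mul_prod {s : ℝ} (hs : 0 < s) (n : ℕ) :
    Gamma (s + n) = Gamma s * ∏ j ∈ range n, (s + j) := by
  induction n with
  | zero => simp
  | succ n ih =>
    rw [Nat.cast_succ, ← add_assoc, Gamma_add_one (by positivity), ih, prod_range_succ]
    ring

theorem Gamma_nat_add_one_add_le (n : ℕ) {s : ℝ} (hs0 : 0 < s) (hs1 : s < 1) :
    Gamma (n + 1 + s) ≤ n ! * ((n : ℝ) + 1) ^ s := by
  have h := Gamma_mul_add_mul_le_rpow_Gamma_mul_rpow_Gamma (s := n + 1) (t := n + 2)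
    (a := 1 - s) (b := s) (by positivity) (by positivity) (by linarith) hs0 (by ring)
  have h1 : Gamma (n + 1) = n ! := Gamma_nat_eq_factorial n
  have h2 : Gamma (n + 2) = (n + 1) * n ! := by
    rw [show (n : ℝ) + 2 = (n + 1 : ℕ) + 1 by push_cast; ring, Gamma_nat_eq_factorial,
      Nat.factorial_succ]
    push_cast; ring
  have hf : (0 : ℝ) < n ! := by positivity
  rw [show (1 - s) * (n + 1) + s * (n + 2) = (n : ℝ) + 1 + s by ring, h1, h2,
    mul_rpow (by positivity) hf.le, mul_left_comm, ← rpow_add hf] at h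
  simpa [mul_comm] using h

theorem factorial_succ_le_Gamma_mul_rpow (n : ℕ) {s : ℝ} (hs0 : 0 < s) (hs1 : s < 1) :
    ((n + 1) ! : ℝ) ≤ Gamma (n + 1 + s) * ((n : ℝ) + 1 + s) ^ (1 - s) := by
  have hpos : (0 : ℝ) < n + 1 + s := by positivity
  have hG : 0 < Gamma (n + 1 + s) := Gamma_pos_of_pos hpos
  have h := Gamma_mul_add_mul_le_rpow_Gamma_mul_rpow_Gamma (s := n + 1 + s) (t := n + 1 + s + 1)
    (a := s) (b := 1 - s) hpos (by positivity) hs0 (by linarith) (by ring)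
  have harg : s * (n + 1 + s) + (1 - s) * (n + 1 + s + 1) = ((n + 1 : ℕ) : ℝ) + 1 := by
    push_cast; ring
  rw [harg, Gamma_nat_eq_factorial, Gamma_add_one hpos.ne', mul_rpow hpos.le hG.le,
    mul_left_comm, ← rpow_add hG] at h
  simpa [mul_comm] using h

theorem Gamma_one_add_div_mul_prod_le (n k m : ℕ) (hk : 0 < k) (hkm : k < m) {u : ℝ}
    (hu : 0 ≤ u) (hpow : ((n : ℝ) + 1) ^ k ≤ u ^ m) :
    Gamma (1 + k / m) * ∏ j ∈ range n, (1 + k / m + j : ℝ) ≤ n ! * u := by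
  have hm : (0 : ℝ) < m := by exact_mod_cast hk.trans hkm
  have hs0 : (0 : ℝ) < k / m := div_pos (by exact_mod_cast hk) hm
  have hs1 : (k : ℝ) / m < 1 := by rw [div_lt_one hm]; exact_mod_cast hkm
  rw [← Gamma_add_nat_eq_mul_prod (by positivity),
    show 1 + (k : ℝ) / m + n = n + 1 + k / m by ring]
  calc Gamma (n + 1 + k / m) ≤ n ! * ((n : ℝ) + 1) ^ ((k : ℝ) / m) :=
        Gamma_nat_add_one_add_le n hs0 hs1
    _ ≤ n ! * u := by
        gcongr
        exact rpow_div_le_of_pow_le (by positivity) hu (by omega) hpow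

theorem factorial_succ_le_Gamma_one_add_div_mul_prod (n k m : ℕ) (hk : 0 < k) (hkm : k < m)
    {v : ℝ} (hv : 0 ≤ v) (hpow : ((n : ℝ) + 1 + k / m) ^ (m - k) ≤ v ^ m) :
    ((n + 1) ! : ℝ) ≤ Gamma (1 + k / m) * (∏ j ∈ range n, (1 + k / m + j : ℝ)) * v := by
  have hm : (0 : ℝ) < m := by exact_mod_cast hk.trans hkm
  have hs0 : (0 : ℝ) < k / m := div_pos (by exact_mod_cast hk) hm
  have hs1 : (k : ℝ) / m < 1 := by rw [div_lt_one hm]; exact_mod_cast hkm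
  rw [← Gamma_add_nat_eq_mul_prod (by positivity),
    show 1 + (k : ℝ) / m + n = n + 1 + k / m by ring]
  have hexp : 1 - (k : ℝ) / m = ((m - k : ℕ) : ℝ) / m := by
    rw [Nat.cast_sub hkm.le]; field_simp
  have hG : 0 ≤ Gamma (n + 1 + k / m) := (Gamma_pos_of_pos (by linarith)).le
  calc ((n + 1) ! : ℝ)
      ≤ Gamma (n + 1 + k / m) * ((n : ℝ) + 1 + k / m) ^ (1 - (k : ℝ) / m) :=
        factorial_succ_le_Gamma_mul_rpow n hs0 hs1
    _ ≤ Gamma (n + 1 + k / m) * v := by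
        gcongr
        rw [hexp]
        exact rpow_div_le_of_pow_le (by positivity) hv (by omega) hpow

theorem Gamma_nine_eighths_le : Gamma (9 / 8) ≤ 0.943 := by
  have h := Gamma_one_add_div_mul_prod_le 63 1 8 (u := 1.682) one_pos (by norm_num)
    (by norm_num) (by norm_num)
  norm_num [prod_range_succ, Nat.factorial] at h
  linarith

theorem Gamma_five_fourths_le : Gamma (5 / 4) ≤ 0.908 := by
  have h := Gamma_one_add_div_mul_prod_le 63 1 4 (u := 2.8285) one_pos (by norm_num)
    (by norm_num) (by norm_num)
  norm_num [prod_range_succ, Nat.factorial] at h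
  linarith

theorem Gamma_three_halves_le : Gamma (3 / 2) ≤ 0.888 := by
  have h := Gamma_one_add_div_mul_prod_le 63 1 2 (u := 8) one_pos (by norm_num) (by norm_num)
    (by norm_num)
  norm_num [prod_range_succ, Nat.factorial] at h
  linarith

theorem Gamma_seven_fourths_le : Gamma (7 / 4) ≤ 0.921 := by
  have h := Gamma_one_add_div_mul_prod_le 63 3 4 (u := 22.628) (by norm_num) (by norm_num)
    (by norm_num) (by norm_num)
  norm_num [prod_range_succ, Nat.factorial] at h
  linarith

theorem Gamma_fifteen_eighths_le : Gamma (15 / 8) ≤ 0.955 := by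
  have h := Gamma_one_add_div_mul_prod_le 63 7 8 (u := 38.06) (by norm_num) (by norm_num)
    (by norm_num) (by norm_num)
  norm_num [prod_range_succ, Nat.factorial] at h
  linarith

theorem le_Gamma_three_halves : 0.884 ≤ Gamma (3 / 2) := by
  have h := factorial_succ_le_Gamma_one_add_div_mul_prod 63 1 2 (v := 8.032) one_pos
    (by norm_num) (by norm_num) (by norm_num)
  norm_num [prod_range_succ, Nat.factorial] at h
  linarith

theorem le_Gamma_seven_fourths : 0.917 ≤ Gamma (7 / 4) := by
  have h := factorial_succ_le_Gamma_one_add_div_mul_prod 63 3 4 (v := 2.837) (by norm_num)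
    (by norm_num) (by norm_num) (by norm_num)
  norm_num [prod_range_succ, Nat.factorial] at h
  linarith

theorem le_Gamma_fifteen_eighths : 0.952 ≤ Gamma (15 / 8) := by
  have h := factorial_succ_le_Gamma_one_add_div_mul_prod 63 7 8 (v := 1.6847) (by norm_num)
    (by norm_num) (by norm_num) (by norm_num)
  norm_num [prod_range_succ, Nat.factorial] at h
  linarith

theorem Gamma_add_one_le_sq_add_two_div_of_chord {α β A B x : ℝ} (hα : 0 < α)
    (hαx : α ≤ x + 1) (hxβ : x + 1 ≤ β) (hαβ : α < β) (hA : Gamma α ≤ A)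
    (hB : Gamma β ≤ B)
    (hpoly : ((β - (x + 1)) * (α * A) + (x + 1 - α) * (β * B)) * (x + 2) ≤
      (β - α) * (x + 1) * (x ^ 2 + 2)) :
    Gamma (x + 1) ≤ (x ^ 2 + 2) / (x + 2) := by
  have hchord := convexOn_Gamma.mul_le_chord (a := α + 1) (b := β + 1) (x := x + 2)
    (by simp only [Set.mem_Ioi]; linarith) (by simp only [Set.mem_Ioi]; linarith)
    (by linarith) (by linarith)
  rw [Gamma_add_one (by linarith), Gamma_add_one (by linarith),
    show x + 2 = (x + 1) + 1 by ring, Gamma_add_one (by linarith)] at hchord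
  have hA' := mul_le_mul_of_nonneg_left (mul_le_mul_of_nonneg_left hA (by linarith : 0 ≤ α))
    (by linarith : 0 ≤ β - (x + 1))
  have hB' := mul_le_mul_of_nonneg_left (mul_le_mul_of_nonneg_left hB (by linarith : 0 ≤ β))
    (by linarith : 0 ≤ x + 1 - α)
  rw [le_div_iff₀ (by linarith)]
  refine le_of_mul_le_mul_left ?_ (mul_pos (by linarith : 0 < β - α) (by linarith : 0 < x + 1))
  calc (β - α) * (x + 1) * (Gamma (x + 1) * (x + 2))
      = (β + 1 - (α + 1)) * ((x + 1) * Gamma (x + 1)) * (x + 2) := by ring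
    _ ≤ ((β - (x + 1)) * (α * A) + (x + 1 - α) * (β * B)) * (x + 2) := by
        gcongr
        · linarith
        · linarith
    _ ≤ (β - α) * (x + 1) * (x ^ 2 + 2) := hpoly

theorem sq_add_one_div_le_Gamma_add_one_of_secant {σ L x : ℝ} (hx : -1 < x) (hxσ : x + 1 ≤ σ)
    (hσ : σ < 2) (hL : L ≤ Gamma σ)
    (hpoly : (2 - σ) * (x ^ 2 + 1) ≤ ((1 - x) * L - (σ - (x + 1))) * (x + 1)) :
    (x ^ 2 + 1) / (x + 1) ≤ Gamma (x + 1) := by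
  have hchord := convexOn_Gamma.mul_le_chord (a := x + 1) (b := 2) (x := σ)
    (by simp only [Set.mem_Ioi]; linarith) (by norm_num) hxσ hσ.le
  rw [Gamma_two] at hchord
  have hL' := mul_le_mul_of_nonneg_left hL (by linarith : 0 ≤ 1 - x)
  rw [div_le_iff₀ (by linarith)]
  refine le_of_mul_le_mul_left ?_ (by linarith : 0 < 2 - σ)
  calc (2 - σ) * (x ^ 2 + 1) ≤ ((1 - x) * L - (σ - (x + 1))) * (x + 1) := hpoly
    _ ≤ (2 - σ) * Gamma (x + 1) * (x + 1) :=
        mul_le_mul_of_nonneg_right (by linarith) (by linarith)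
    _ = (2 - σ) * (Gamma (x + 1) * (x + 1)) := by ring

theorem sq_add_one_div_le_Gamma_add_one {x : ℝ} (hx0 : 0 ≤ x) (hx1 : x ≤ 1) :
    (x ^ 2 + 1) / (x + 1) ≤ Gamma (x + 1) := by
  have hγ := eulerMascheroniConstant_lt_two_thirds
  have hγ' := eight_fifteenths_lt_eulerMascheroniConstant
  rcases le_or_gt x (1 / 3) with h1 | h1
  · have h := one_add_mul_sub_two_le_Gamma (t := x + 2) (by linarith)
    rw [show x + 2 = x + 1 + 1 by ring, Gamma_add_one (by linarith)] at h
    rw [div_le_iff₀ (by linarith)]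
    nlinarith [mul_nonneg hx0 (sub_nonneg.2 hγ.le), mul_nonneg hx0 (sub_nonneg.2 h1)]
  rcases le_or_gt x (1 / 2) with h2 | h2
  · exact sq_add_one_div_le_Gamma_add_one_of_secant (by linarith) (by linarith) (by norm_num)
      le_Gamma_three_halves (by nlinarith)
  rcases le_or_gt x (3 / 4) with h3 | h3
  · exact sq_add_one_div_le_Gamma_add_one_of_secant (by linarith) (by linarith) (by norm_num)
      le_Gamma_seven_fourths (by nlinarith)
  rcases le_or_gt x (7 / 8) with h4 | h4
  · exact sq_add_one_div_le_Gamma_add_one_of_secant (by linarith) (by linarith) (by norm_num)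
      le_Gamma_fifteen_eighths (by nlinarith)
  have h := one_add_mul_sub_two_le_Gamma (t := x + 1) (by linarith)
  have hG : 1 - 7 / 15 * (1 - x) ≤ Gamma (x + 1) := by
    nlinarith [mul_nonneg (sub_nonneg.2 hx1) (sub_nonneg.2 hγ'.le)]
  rw [div_le_iff₀ (by linarith)]
  nlinarith [mul_le_mul_of_nonneg_right hG (by linarith : (0 : ℝ) ≤ x + 1),
    mul_nonneg (sub_nonneg.2 h4.le) (sub_nonneg.2 hx1)]

theorem Gamma_add_one_le_sq_add_two_div {x : ℝ} (hx0 : 0 ≤ x) (hx1 : x ≤ 1) :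
    Gamma (x + 1) ≤ (x ^ 2 + 2) / (x + 2) := by
  rcases le_or_gt x (1 / 8) with h1 | h1
  · exact Gamma_add_one_le_sq_add_two_div_of_chord one_pos (by linarith) (by linarith)
      (by norm_num) Gamma_one.le Gamma_nine_eighths_le
      (by nlinarith [mul_nonneg hx0 (sq_nonneg x), mul_nonneg (sub_nonneg.2 h1) (sq_nonneg x)])
  rcases le_or_gt x (1 / 4) with h2 | h2
  · exact Gamma_add_one_le_sq_add_two_div_of_chord (by norm_num) (by linarith) (by linarith)
      (by norm_num) Gamma_nine_eighths_le Gamma_five_fourths_le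
      (by nlinarith [mul_nonneg (sub_nonneg.2 h1.le) (sq_nonneg (x - 0.14)),
        mul_nonneg (sub_nonneg.2 h2) (sq_nonneg (x - 0.14))])
  rcases le_or_gt x (1 / 2) with h3 | h3
  · exact Gamma_add_one_le_sq_add_two_div_of_chord (by norm_num) (by linarith) (by linarith)
      (by norm_num) Gamma_five_fourths_le Gamma_three_halves_le
      (by nlinarith [mul_nonneg (sub_nonneg.2 h2.le) (sq_nonneg (x - 0.35)),
        mul_nonneg (sub_nonneg.2 h3) (sq_nonneg (x - 0.35))])
  rcases le_or_gt x (3 / 4) with h4 | h4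
  · exact Gamma_add_one_le_sq_add_two_div_of_chord (by norm_num) (by linarith) (by linarith)
      (by norm_num) Gamma_three_halves_le Gamma_seven_fourths_le
      (by nlinarith [mul_nonneg (sub_nonneg.2 h3.le) (sq_nonneg (x - 0.62)),
        mul_nonneg (sub_nonneg.2 h4) (sq_nonneg (x - 0.62))])
  rcases le_or_gt x (7 / 8) with h5 | h5
  · exact Gamma_add_one_le_sq_add_two_div_of_chord (by norm_num) (by linarith) (by linarith)
      (by norm_num) Gamma_seven_fourths_le Gamma_fifteen_eighths_le
      (by nlinarith [mul_nonneg (sub_nonneg.2 h4.le) (sq_nonneg (x - 0.84)),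
        mul_nonneg (sub_nonneg.2 h5) (sq_nonneg (x - 0.84))])
  · exact Gamma_add_one_le_sq_add_two_div_of_chord (by norm_num) (by linarith) (by linarith)
      (by norm_num) Gamma_fifteen_eighths_le Gamma_two.le
      (by nlinarith [mul_nonneg (sub_nonneg.2 h5.le) (sq_nonneg (x - 1)),
        mul_nonneg (sub_nonneg.2 hx1) (sq_nonneg (x - 1))])

end Real

/-- Ivády's inequality: for every `x ∈ [0,1]`, the Gamma function satisfies
`(x² + 1)/(x + 1) ≤ Γ(x + 1) ≤ (x² + 2)/(x + 2)`. -/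
theorem gamma_ivady_inequality (x : ℝ) (hx : x ∈ Set.Icc (0 : ℝ) 1) :
    (x ^ 2 + 1) / (x + 1) ≤ Real.Gamma (x + 1) ∧
      Real.Gamma (x + 1) ≤ (x ^ 2 + 2) / (x + 2) :=
  ⟨sq_add_one_div_le_Gamma_add_one hx.1 hx.2, Gamma_add_one_le_sq_add_two_div hx.1 hx.2⟩
end

section
/- Let a < b, let n ∈ ℕ with n ≥ 2, and let α : [a,b] × [a,b] → ℝ be measurable with 1/n < α(t,τ) < 1 for all t, τ ∈ [a,b]. Then for every τ ∈ [a,b], ∫_τ^b (t−τ)^{α(t,τ)−1} / Γ(α(t,τ)) dt < n + b − τ − 1. -/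
open MeasureTheory Set intervalIntegral Real

/-!
Since `Γ ≥ 1` on `(0, 1]`, the kernel at `s = t - τ` is at most `s ^ (α - 1)`, hence at most
`s ^ (1/n - 1)` for `s ≤ 1` and at most `1` for `s ≥ 1`. Integrating, the integral is at most
`n (b - τ) ^ (1/n)` when `b - τ < 1`, which is `< n - 1 + (b - τ)` by the strict Bernoulli
inequality; otherwise it is at most `n + (b - τ - 1)`, strictly because `α > 1/n` on `(τ, τ + 1)`.
-/

lemma Real.measurable_Gamma_s7 : Measurable Gamma := by
  have h : Measurable fun s : ℂ => (Complex.Gamma s)⁻¹⁻¹ :=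
    Complex.differentiable_one_div_Gamma.continuous.measurable.inv
  simp only [inv_inv] at h
  exact Complex.measurable_re.comp (h.comp Complex.measurable_ofReal)

lemma Real.one_le_Gamma_of_le_one {x : ℝ} (hx : 0 < x) (hx1 : x ≤ 1) : 1 ≤ Gamma x := by
  simpa only [Gamma_one] using
    Gamma_strictAntiOn_Ioc.antitoneOn ⟨hx, hx1⟩ ⟨one_pos, le_rfl⟩ hx1

lemma integral_rpow_sub_one {p : ℝ} (hp : 0 < p) (L : ℝ) :
    ∫ s in (0 : ℝ)..L, s ^ (p - 1) = L ^ p / p := by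
  rw [integral_rpow (Or.inl (by linarith)), sub_add_cancel, zero_rpow hp.ne', sub_zero]

noncomputable def riemannLiouvilleKernel (β s : ℝ) : ℝ := s ^ (β - 1) / Gamma β

section Kernel

variable {β p s : ℝ}

lemma riemannLiouvilleKernel_nonneg (hβ : 0 < β) (hs : 0 ≤ s) : 0 ≤ riemannLiouvilleKernel β s :=
  div_nonneg (rpow_nonneg hs _) (Gamma_pos_of_pos hβ).le

lemma riemannLiouvilleKernel_le_rpow (hβ : 0 < β) (hβ1 : β ≤ 1) (hs : 0 ≤ s) :
    riemannLiouvilleKernel β s ≤ s ^ (β - 1) :=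
  div_le_self (rpow_nonneg hs _) (one_le_Gamma_of_le_one hβ hβ1)

lemma riemannLiouvilleKernel_le_rpow_of_le (hp : 0 < p) (hpβ : p ≤ β) (hβ1 : β ≤ 1)
    (hs : 0 < s) (hs1 : s ≤ 1) : riemannLiouvilleKernel β s ≤ s ^ (p - 1) :=
  (riemannLiouvilleKernel_le_rpow (hp.trans_le hpβ) hβ1 hs.le).trans <|
    rpow_le_rpow_of_exponent_ge hs hs1 (by linarith)

lemma riemannLiouvilleKernel_lt_rpow_of_lt (hp : 0 < p) (hpβ : p < β) (hβ1 : β ≤ 1)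
    (hs : 0 < s) (hs1 : s < 1) : riemannLiouvilleKernel β s < s ^ (p - 1) :=
  (riemannLiouvilleKernel_le_rpow (hp.trans hpβ) hβ1 hs.le).trans_lt <|
    rpow_lt_rpow_of_exponent_gt hs hs1 (by linarith)

lemma riemannLiouvilleKernel_le_one (hβ : 0 < β) (hβ1 : β ≤ 1) (hs : 1 ≤ s) :
    riemannLiouvilleKernel β s ≤ 1 :=
  (riemannLiouvilleKernel_le_rpow hβ hβ1 (by linarith)).trans <|
    rpow_le_one_of_one_le_of_nonpos hs (by linarith)

end Kernel

section VariableOrder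

variable {γ : ℝ → ℝ} {p L : ℝ}

lemma measurable_riemannLiouvilleKernel (hγ : Measurable γ) :
    Measurable fun s => riemannLiouvilleKernel (γ s) s :=
  (measurable_id.pow (hγ.sub_const 1)).div (measurable_Gamma_s7.comp hγ)

/-- Dominated by `s ^ (p - 1)` near `0` and by `1` away from it. -/
lemma intervalIntegrable_riemannLiouvilleKernel (hp : 0 < p) (hL : 0 ≤ L)
    (hγm : Measurable γ) (hγ : ∀ s ∈ Ioc 0 L, p ≤ γ s ∧ γ s ≤ 1) :
    IntervalIntegrable (fun s => riemannLiouvilleKernel (γ s) s) volume 0 L := by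
  refine ((intervalIntegrable_rpow' (r := p - 1) (by linarith)).add
    (intervalIntegrable_const (c := 1))).mono_fun'
    (measurable_riemannLiouvilleKernel hγm).aestronglyMeasurable ?_
  rw [uIoc_of_le hL, Filter.EventuallyLE, ae_restrict_iff' measurableSet_Ioc]
  refine .of_forall fun s hs => ?_
  obtain ⟨hpγ, hγ1⟩ := hγ s hs
  have hγ0 := hp.trans_le hpγ
  rw [norm_of_nonneg (riemannLiouvilleKernel_nonneg hγ0 hs.1.le)]
  rcases le_total s 1 with hs1 | hs1
  · linarith [riemannLiouvilleKernel_le_rpow_of_le hp hpγ hγ1 hs.1 hs1]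
  · linarith [riemannLiouvilleKernel_le_one hγ0 hγ1 hs1, rpow_nonneg hs.1.le (p - 1)]

theorem integral_riemannLiouvilleKernel_lt (hp : 0 < p) (hL : 0 ≤ L) (hγm : Measurable γ)
    (hγ : ∀ s ∈ Icc 0 L, p < γ s ∧ γ s ≤ 1) :
    ∫ s in (0 : ℝ)..L, riemannLiouvilleKernel (γ s) s < 1 / p + L - 1 := by
  have hp1 : p < 1 := (hγ 0 ⟨le_rfl, hL⟩).1.trans_le (hγ 0 ⟨le_rfl, hL⟩).2
  have hint : ∀ M ∈ Icc 0 L,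
      IntervalIntegrable (fun s => riemannLiouvilleKernel (γ s) s) volume 0 M :=
    fun M hM => intervalIntegrable_riemannLiouvilleKernel hp hM.1 hγm fun s hs =>
      have h := hγ s ⟨hs.1.le, hs.2.trans hM.2⟩
      ⟨h.1.le, h.2⟩
  have hpow : ∀ M, IntervalIntegrable (fun s => s ^ (p - 1)) volume 0 M :=
    fun M => intervalIntegrable_rpow' (by linarith)
  rcases lt_or_ge L 1 with hL1 | hL1
  · -- strict Bernoulli inequality, as `L ≠ 1`
    have hbern : L ^ p < 1 + p * (L - 1) := by
      simpa using rpow_one_add_lt_one_add_mul_self (s := L - 1) (by linarith) (by linarith) hp hp1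
    have hmono : ∫ s in (0 : ℝ)..L, riemannLiouvilleKernel (γ s) s ≤ L ^ p / p := by
      rw [← integral_rpow_sub_one hp]
      refine integral_mono_on_of_le_Ioo hL (hint L ⟨hL, le_rfl⟩) (hpow L) fun s hs => ?_
      have h := hγ s (Ioo_subset_Icc_self hs)
      exact riemannLiouvilleKernel_le_rpow_of_le hp h.1.le h.2 hs.1 (by linarith [hs.2])
    have hp' : (1 / p + L - 1) * p = 1 + p * (L - 1) := by field_simp; ring
    exact hmono.trans_lt ((div_lt_iff₀ hp).2 (by rw [hp']; exact hbern))
  · -- strictness now comes from `p < γ s` on `(0, 1)`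
    have hint1 := hint 1 ⟨zero_le_one, hL1⟩
    have hint1L : IntervalIntegrable (fun s => riemannLiouvilleKernel (γ s) s) volume 1 L :=
      (hint L ⟨hL, le_rfl⟩).mono_set (uIcc_subset_uIcc (by simp [hL, hL1]) right_mem_uIcc)
    have hhead : ∫ s in (0 : ℝ)..1, riemannLiouvilleKernel (γ s) s < 1 / p := by
      have hgap : 0 < ∫ s in (0 : ℝ)..1, (s ^ (p - 1) - riemannLiouvilleKernel (γ s) s) := by
        refine intervalIntegral_pos_of_pos_on ((hpow 1).sub hint1) (fun s hs => ?_) one_pos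
        have h := hγ s ⟨hs.1.le, by linarith [hs.2]⟩
        exact sub_pos.2 (riemannLiouvilleKernel_lt_rpow_of_lt hp h.1 h.2 hs.1 hs.2)
      rw [integral_sub (hpow 1) hint1, integral_rpow_sub_one hp, one_rpow] at hgap
      linarith
    have htail : ∫ s in (1 : ℝ)..L, riemannLiouvilleKernel (γ s) s ≤ L - 1 := by
      have h := integral_mono_on hL1 hint1L intervalIntegrable_const fun s hs =>
        have hγs := hγ s ⟨by linarith [hs.1], hs.2⟩
        riemannLiouvilleKernel_le_one (hp.trans hγs.1) hγs.2 hs.1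
      simpa using h
    rw [← integral_add_adjacent_intervals hint1 hint1L]
    linarith

end VariableOrder

theorem kernel_integral_bound_general (a b : ℝ) (n : ℕ) (hn : 2 ≤ n)
    (α : ℝ → ℝ → ℝ) (hαm : Measurable (Function.uncurry α))
    (hα : ∀ t ∈ Set.Icc a b, ∀ τ ∈ Set.Icc a b, 1 / (n : ℝ) < α t τ ∧ α t τ < 1) :
    ∀ τ ∈ Set.Icc a b,
      (∫ t in τ..b, (t - τ) ^ (α t τ - 1) / Real.Gamma (α t τ)) < (n : ℝ) + b - τ - 1 := by
  intro τ hτ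
  have hn0 : (0 : ℝ) < n := by exact_mod_cast (by omega : 0 < n)
  have hγm : Measurable fun s => α (s + τ) τ :=
    hαm.comp ((measurable_id.add_const τ).prodMk measurable_const)
  have hbound := integral_riemannLiouvilleKernel_lt (one_div_pos.2 hn0) (sub_nonneg.2 hτ.2) hγm
    fun s hs =>
      have h := hα (s + τ) ⟨by linarith [hs.1, hτ.1], by linarith [hs.2]⟩ τ hτ
      ⟨h.1, h.2.le⟩
  have hshift : ∫ t in τ..b, (t - τ) ^ (α t τ - 1) / Gamma (α t τ)
      = ∫ s in (0 : ℝ)..b - τ, riemannLiouvilleKernel (α (s + τ) τ) s := by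
    simpa only [riemannLiouvilleKernel, sub_add_cancel, sub_self] using
      integral_comp_sub_right (a := τ) (b := b) (fun s => riemannLiouvilleKernel (α (s + τ) τ) s) τ
  rw [hshift]
  rw [one_div_one_div] at hbound
  linarith

/-- For a measurable variable order `α` with `1/n < α(t,τ) < 1` on `[a,b]²` (`n ≥ 2`),
the kernel of the left Riemann–Liouville integral of variable order `α` satisfies
`∫_τ^b (t−τ)^(α(t,τ)−1)/Γ(α(t,τ)) dt < n + b − τ − 1` for every `τ ∈ [a,b]`. -/
theorem kernel_integral_bound (a b : ℝ) (hab : a < b) (n : ℕ) (hn : 2 ≤ n)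
    (α : ℝ → ℝ → ℝ) (hαm : Measurable (Function.uncurry α))
    (hα : ∀ t ∈ Set.Icc a b, ∀ τ ∈ Set.Icc a b, 1 / (n : ℝ) < α t τ ∧ α t τ < 1) :
    ∀ τ ∈ Set.Icc a b,
      (∫ t in τ..b, (t - τ) ^ (α t τ - 1) / Real.Gamma (α t τ)) < (n : ℝ) + b - τ - 1 :=
  kernel_integral_bound_general a b n hn α hαm hα
end

section
/- Let a < b, let n ∈ ℕ with n ≥ 2, and let β : [a,b] → ℝ depend only on t with 1/n < β(t) < 1 for all t ∈ [a,b]. Then the function y(t) = (t−a)² satisfies, for all t ∈ (a,b], the variable order fractional differential equation (ₐI^{β}_t y)(t) = Γ(3) · (t−a)^{2+β(t)} / Γ(β(t)+3); consequently, the quantity Γ(β(t)+3)/(Γ(3)(t−a)^{2+β(t)}) · (ₐI^{β}_t y)(t) − 1 vanishes identically on (a,b], so y satisfies the Euler–Lagrange equation (ₜI^{β}_b)[ (Γ(β(t)+3)/(Γ(3)(t−a)^{2+β(t)}) · (ₐI^{β}_t y)(t) − 1) / (2·√(1 + Γ(β(t)+3)/(2Γ(3)(t−a)^{2+β(t)})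 · ((ₐI^{β}_t y)(t))² − (ₐI^{β}_t y)(t))) ] = 0 for all t ∈ [a,b]. -/
open MeasureTheory

/-- Left Riemann–Liouville integral of variable order `β` depending only on `t`. -/
noncomputable def leftRLintT (a : ℝ) (β : ℝ → ℝ) (y : ℝ → ℝ) (t : ℝ) : ℝ :=
  ∫ τ in a..t, (t - τ) ^ (β t - 1) / Real.Gamma (β t) * y τ

/-- Right Riemann–Liouville integral of variable order `β` depending only on the
first variable. -/
noncomputable def rightRLintT (b : ℝ) (β : ℝ → ℝ) (g : ℝ → ℝ) (t : ℝ) : ℝ :=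
  ∫ τ in t..b, (τ - t) ^ (β τ - 1) / Real.Gamma (β τ) * g τ

/-! Since `β` is frozen at the upper limit `t`, `(ₐI^β_t y)(t)` is the constant order
integral of order `β t`, and `(τ - a)²` is integrated by expanding
`(τ - a)² = ((t - a) - (t - τ))²` into three powers of `t - τ`. The Euler–Lagrange integrand
then vanishes on `(t, b]`. -/

open Real intervalIntegral

lemma Real.Gamma_add_three {c : ℝ} (hc : 0 < c) :
    Gamma (c + 3) = (c + 2) * (c + 1) * c * Gamma c := by
  rw [show c + 3 = c + 2 + 1 by ring, Gamma_add_one (by linarith),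
    show c + 2 = c + 1 + 1 by ring, Gamma_add_one (by linarith), Gamma_add_one hc.ne']
  ring

lemma intervalIntegral.integral_rpow_sub_one_mul_sub_sq {c s : ℝ} (hc : 0 < c) (hs : 0 ≤ s) :
    ∫ u in (0 : ℝ)..s, u ^ (c - 1) * (s - u) ^ 2 = 2 * s ^ (c + 2) / (c * (c + 1) * (c + 2)) := by
  have expand : Set.EqOn (fun u => u ^ (c - 1) * (s - u) ^ 2)
      (fun u => s ^ 2 * u ^ (c - 1) - 2 * s * u ^ (c - 1 + 1) + u ^ (c - 1 + 2))
      (Set.uIcc 0 s) := by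
    intro u hu
    have hu : 0 ≤ u := (Set.uIcc_of_le hs ▸ hu).1
    simp only [rpow_add' hu (show c - 1 + 1 ≠ 0 by linarith),
      rpow_add' hu (show c - 1 + 2 ≠ 0 by linarith), rpow_one, rpow_two]
    ring
  have integrable (r : ℝ) (hr : -1 < r) : IntervalIntegrable (fun u => u ^ r) volume 0 s :=
    intervalIntegrable_rpow' hr
  have primitive (r : ℝ) (hr : -1 < r) : ∫ u in (0 : ℝ)..s, u ^ r = s ^ (r + 1) / (r + 1) := by
    rw [integral_rpow (Or.inl hr), zero_rpow (by linarith), sub_zero]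
  rw [integral_congr expand,
    integral_add ((integrable _ (by linarith)).const_mul _ |>.sub
      ((integrable _ (by linarith)).const_mul _)) (integrable _ (by linarith)),
    integral_sub ((integrable _ (by linarith)).const_mul _)
      ((integrable _ (by linarith)).const_mul _),
    integral_const_mul, integral_const_mul, primitive _ (by linarith),
    primitive _ (by linarith), primitive _ (by linarith)]
  have split_pow (x : ℝ) (k : ℕ) (hx : x = c + k) : s ^ x = s ^ c * s ^ k := by
    rw [hx, rpow_add' hs (by positivity), rpow_natCast]
  rw [split_pow (c - 1 + 1) 0 (by push_cast; ring), split_pow (c - 1 + 1 + 1) 1 (by push_cast; ring),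
    split_pow (c - 1 + 2 + 1) 2 (by push_cast; ring), split_pow (c + 2) 2 (by push_cast; ring)]
  have : c - 1 + 1 ≠ 0 := by linarith
  have : c - 1 + 1 + 1 ≠ 0 := by linarith
  have : c - 1 + 2 + 1 ≠ 0 := by linarith
  field_simp
  ring

lemma leftRLintT_sub_sq {a t : ℝ} {β : ℝ → ℝ} (hβ : 0 < β t) (hat : a ≤ t) :
    leftRLintT a β (fun τ => (τ - a) ^ 2) t =
      Gamma 3 * (t - a) ^ (2 + β t) / Gamma (β t + 3) := by
  rw [leftRLintT]
  set c := β t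
  have hΓ : Gamma c ≠ 0 := (Gamma_pos_of_pos hβ).ne'
  calc ∫ τ in a..t, (t - τ) ^ (c - 1) / Gamma c * (τ - a) ^ 2
      = (∫ τ in a..t, (fun u => u ^ (c - 1) * (t - a - u) ^ 2) (t - τ)) / Gamma c := by
        rw [← intervalIntegral.integral_div]
        congr 1 with τ
        ring
    _ = (∫ u in (0 : ℝ)..t - a, u ^ (c - 1) * (t - a - u) ^ 2) / Gamma c := by
        rw [integral_comp_sub_left (fun u => u ^ (c - 1) * (t - a - u) ^ 2) t, sub_self]
    _ = Gamma 3 * (t - a) ^ (2 + c) / Gamma (c + 3) := by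
        rw [integral_rpow_sub_one_mul_sub_sq hβ (sub_nonneg.2 hat), Gamma_add_three hβ, add_comm 2 c]
        simp only [Gamma_ofNat_eq_factorial, Nat.factorial_two, Nat.cast_ofNat]
        field_simp

lemma rightRLintT_eq_zero_of_eqOn_zero {b t : ℝ} {β g : ℝ → ℝ}
    (hg : ∀ τ ∈ Set.uIoc t b, g τ = 0) : rightRLintT b β g t = 0 := by
  rw [rightRLintT, ← integral_zero (a := t) (b := b) (μ := volume)]
  exact integral_congr_ae (ae_of_all _ fun τ hτ => by simp [hg τ hτ])

theorem example_extremal_general (a b : ℝ) (n : ℕ)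
    (β : ℝ → ℝ) (hβ : ∀ t ∈ Set.Icc a b, 1 / (n : ℝ) < β t ∧ β t < 1) :
    (∀ t ∈ Set.Ioc a b,
        leftRLintT a β (fun τ => (τ - a) ^ 2) t =
          Real.Gamma 3 * (t - a) ^ (2 + β t) / Real.Gamma (β t + 3)) ∧
    (∀ t ∈ Set.Ioc a b,
        Real.Gamma (β t + 3) / (Real.Gamma 3 * (t - a) ^ (2 + β t)) *
            leftRLintT a β (fun τ => (τ - a) ^ 2) t - 1 = 0) ∧
    (∀ t ∈ Set.Icc a b,
        rightRLintT b β (fun τ =>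
          (Real.Gamma (β τ + 3) / (Real.Gamma 3 * (τ - a) ^ (2 + β τ)) *
              leftRLintT a β (fun s => (s - a) ^ 2) τ - 1) /
            (2 * Real.sqrt (1 +
              Real.Gamma (β τ + 3) / (2 * Real.Gamma 3 * (τ - a) ^ (2 + β τ)) *
                (leftRLintT a β (fun s => (s - a) ^ 2) τ) ^ 2 -
              leftRLintT a β (fun s => (s - a) ^ 2) τ))) t = 0) := by
  have hβ_pos : ∀ t ∈ Set.Ioc a b, 0 < β t := fun t ht =>
    lt_of_le_of_lt (by positivity) (hβ t (Set.Ioc_subset_Icc_self ht)).1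
  have solution : ∀ t ∈ Set.Ioc a b, leftRLintT a β (fun τ => (τ - a) ^ 2) t =
      Gamma 3 * (t - a) ^ (2 + β t) / Gamma (β t + 3) := fun t ht =>
    leftRLintT_sub_sq (hβ_pos t ht) ht.1.le
  have residual : ∀ t ∈ Set.Ioc a b,
      Gamma (β t + 3) / (Gamma 3 * (t - a) ^ (2 + β t)) *
        leftRLintT a β (fun τ => (τ - a) ^ 2) t - 1 = 0 := by
    intro t ht
    have : Gamma (β t + 3) ≠ 0 := (Gamma_pos_of_pos (by linarith [hβ_pos t ht])).ne'
    have : (t - a) ^ (2 + β t) ≠ 0 := (rpow_pos_of_pos (sub_pos.2 ht.1) _).ne'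
    rw [solution t ht]
    field_simp
    simp
  refine ⟨solution, residual, fun t ht => rightRLintT_eq_zero_of_eqOn_zero fun τ hτ => ?_⟩
  rw [Set.uIoc_of_le ht.2] at hτ
  rw [residual τ ⟨ht.1.trans_lt hτ.1, hτ.2⟩, zero_div]

/-- The function `y(t) = (t−a)²` solves the variable order fractional equation
`(ₐI^β_t y)(t) = Γ(3)(t−a)^(2+β(t))/Γ(β(t)+3)` on `(a,b]`; consequently the quantity
`Γ(β(t)+3)/(Γ(3)(t−a)^(2+β(t)))·(ₐI^β_t y)(t) − 1` vanishes on `(a,b]`, and `y`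
satisfies the Euler–Lagrange equation of Example 1 on all of `[a,b]`. -/
theorem example_extremal (a b : ℝ) (hab : a < b) (n : ℕ) (hn : 2 ≤ n)
    (β : ℝ → ℝ) (hβ : ∀ t ∈ Set.Icc a b, 1 / (n : ℝ) < β t ∧ β t < 1) :
    (∀ t ∈ Set.Ioc a b,
        leftRLintT a β (fun τ => (τ - a) ^ 2) t =
          Real.Gamma 3 * (t - a) ^ (2 + β t) / Real.Gamma (β t + 3)) ∧
    (∀ t ∈ Set.Ioc a b,
        Real.Gamma (β t + 3) / (Real.Gamma 3 * (t - a) ^ (2 + β t)) *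
            leftRLintT a β (fun τ => (τ - a) ^ 2) t - 1 = 0) ∧
    (∀ t ∈ Set.Icc a b,
        rightRLintT b β (fun τ =>
          (Real.Gamma (β τ + 3) / (Real.Gamma 3 * (τ - a) ^ (2 + β τ)) *
              leftRLintT a β (fun s => (s - a) ^ 2) τ - 1) /
            (2 * Real.sqrt (1 +
              Real.Gamma (β τ + 3) / (2 * Real.Gamma 3 * (τ - a) ^ (2 + β τ)) *
                (leftRLintT a β (fun s => (s - a) ^ 2) τ) ^ 2 -
              leftRLintT a β (fun s => (s - a) ^ 2) τ))) t = 0) :=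
  example_extremal_general a b n β hβ
end
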